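/- arXiv:1909.04342 — 6 statements merged into one kernel-verified Lean document; each statement's English description precedes it below -/
import Mathlib

section
/- Let (ũ_k)_{k≥0} be the Lehmer sequence associated to ζ and η. Then for all integers m, k ≥ 1: m divides ũ_k if and only if gcd(m, c₂) = 1 and ρ(m) divides k. -/
/-!
From the closed form, `u 0 = 0`, `u 1 = 1` and `u (n + 2) = e n * u (n + 1) - c₂ * u n`, where
`e n` is `1` for even `n` and `c₁` for odd `n`. The recurrence alone gives the addition law
`u (a + 1 + b) = ε * u (a + 1) * u (b + 1) - ε' * c₂ * u a * u b` with parity weights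
`ε, ε' ∈ {1, c₁}`, so `m ∣ u a` and `m ∣ u b` give `m ∣ u (a + b)`. Conversely, as `u (a + 1)` is
coprime to `c₂`, to `u a` and, for odd `a + 1`, to `c₁`, the divisibilities `m ∣ u a` and
`m ∣ u (a + t)` give `m ∣ u t`. Hence the indices `k` with `m ∣ u k` are the multiples of the least
positive one, `ρ m`; and a divisor of some `u k` with `k > 0` is coprime to `c₂`.
-/

structure IsLehmerSequence (c₁ c₂ : ℤ) (u : ℕ → ℤ) : Prop where
  apply_zero : u 0 = 0
  apply_one : u 1 = 1
  apply_add_two : ∀ n, u (n + 2) = (if Even n then 1 else c₁) * u (n + 1) - c₂ * u n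

namespace IsLehmerSequence

variable {c₁ c₂ : ℤ} {u : ℕ → ℤ}

theorem of_binet {ζ η : ℂ} (hc₁ : (c₁ : ℂ) = (ζ + η) ^ 2) (hc₂ : (c₂ : ℂ) = ζ * η)
    (hne : ζ ≠ η) (hadd : ζ + η ≠ 0)
    (hu : ∀ k : ℕ, (u k : ℂ) =
      if Odd k then (ζ ^ k - η ^ k) / (ζ - η) else (ζ ^ k - η ^ k) / (ζ ^ 2 - η ^ 2)) :
    IsLehmerSequence c₁ c₂ u := by
  have hsub : ζ - η ≠ 0 := sub_ne_zero.mpr hne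
  have hsq : ζ ^ 2 - η ^ 2 ≠ 0 := by
    rw [sq_sub_sq]; exact mul_ne_zero hadd hsub
  refine ⟨Int.cast_injective (α := ℂ) ?_, Int.cast_injective (α := ℂ) ?_, fun n => ?_⟩
  · simp [hu 0]
  · simp [hu 1, hsub]
  apply Int.cast_injective (α := ℂ)
  push_cast
  rw [hu, hu, hu, hc₁, hc₂]
  by_cases hn : Even n <;>
    simp only [Nat.even_add_one, ← Nat.not_even_iff_odd, hn, not_true_eq_false, not_false_eq_true,
      ↓reduceIte] <;>
    field_simp <;>
    ring

variable (hu : IsLehmerSequence c₁ c₂ u)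
include hu

theorem apply_two : u 2 = 1 := by
  simpa [hu.apply_zero, hu.apply_one] using hu.apply_add_two 0

theorem apply_add_one_add (a b : ℕ) : u (a + 1 + b) =
    (if Even (a + 1) ∧ Odd b then c₁ else 1) * (u (a + 1) * u (b + 1)) -
      (if Odd (a + 1) ∧ Even b then c₁ else 1) * (c₂ * (u a * u b)) := by
  induction b using Nat.twoStepInduction with
  | zero => simp [hu.apply_zero, hu.apply_one]
  | one =>
    rw [hu.apply_two, hu.apply_one, hu.apply_add_two a]
    by_cases ha : Even a <;> simp [ha, parity_simps, ← Nat.not_even_iff_odd]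
  | more b ih₀ ih₁ =>
    rw [← add_assoc, hu.apply_add_two, add_assoc (a + 1) b 1, ih₁, ih₀,
      show b + 2 + 1 = b + 1 + 2 by ring, hu.apply_add_two (b + 1), hu.apply_add_two b]
    by_cases ha : Even a <;> by_cases hb : Even b <;>
      simp only [Nat.even_add, Nat.even_add_one, ← Nat.not_even_iff_odd, ha, hb, iff_true,
        iff_false, not_true_eq_false, not_false_eq_true, ↓reduceIte, and_true, and_false, and_self,
        one_mul] <;>
      ring

theorem dvd_apply_add {M : ℤ} {a b : ℕ} (ha : M ∣ u a) (hb : M ∣ u b) : M ∣ u (a + b) := by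
  cases a with
  | zero => simpa using hb
  | succ a =>
    rw [hu.apply_add_one_add]
    exact dvd_sub ((ha.mul_right _).mul_left _) (((hb.mul_left _).mul_left _).mul_left _)

theorem dvd_apply_mul {M : ℤ} {r : ℕ} (hr : M ∣ u r) (j : ℕ) : M ∣ u (r * j) := by
  induction j with
  | zero => simp [hu.apply_zero]
  | succ j ih => rw [Nat.mul_succ]; exact hu.dvd_apply_add ih hr

theorem isCoprime_apply_c₂ (hcop : IsCoprime c₁ c₂) {n : ℕ} (hn : 0 < n) :
    IsCoprime (u n) c₂ := by
  suffices ∀ n, IsCoprime (u (n + 1)) c₂ ∧ IsCoprime (u (n + 2)) c₂ by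
    obtain ⟨n, rfl⟩ := Nat.exists_eq_add_of_lt hn
    simpa [add_comm] using (this n).1
  intro n
  induction n with
  | zero => simp [hu.apply_one, hu.apply_two, isCoprime_one_left]
  | succ n ih =>
    refine ⟨ih.2, ?_⟩
    rw [hu.apply_add_two, sub_eq_add_neg, ← mul_neg, IsCoprime.add_mul_left_left_iff]
    split_ifs
    · simpa using ih.2
    · exact hcop.mul_left ih.2

theorem isCoprime_apply_add_one (hcop : IsCoprime c₁ c₂) (n : ℕ) :
    IsCoprime (u (n + 1)) (u n) := by
  induction n with
  | zero => simp [hu.apply_one, isCoprime_one_left]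
  | succ n ih =>
    rw [hu.apply_add_two, sub_eq_neg_add, IsCoprime.add_mul_right_left_iff, IsCoprime.neg_left_iff]
    exact (hu.isCoprime_apply_c₂ hcop n.succ_pos).symm.mul_left ih.symm

theorem isCoprime_apply_c₁_of_odd (hcop : IsCoprime c₁ c₂) {n : ℕ} (hn : Odd n) :
    IsCoprime (u n) c₁ := by
  obtain ⟨k, rfl⟩ := hn
  induction k with
  | zero => simp [hu.apply_one, isCoprime_one_left]
  | succ k ih =>
    rw [show 2 * (k + 1) + 1 = 2 * k + 1 + 2 by ring, hu.apply_add_two,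
      if_neg (by simp [parity_simps]), sub_eq_neg_add, IsCoprime.add_mul_left_left_iff,
      IsCoprime.neg_left_iff]
    exact hcop.symm.mul_left ih

theorem dvd_apply_of_dvd_apply_add (hcop : IsCoprime c₁ c₂) {M : ℤ} {a t : ℕ} (ha : M ∣ u a)
    (h : M ∣ u (a + t)) : M ∣ u t := by
  cases a with
  | zero => simpa using h
  | succ a =>
    have hc₂ : IsCoprime M c₂ :=
      (hu.isCoprime_apply_c₂ hcop a.succ_pos).of_isCoprime_of_dvd_left ha
    have hprev : IsCoprime M (u a) :=
      (hu.isCoprime_apply_add_one hcop a).of_isCoprime_of_dvd_left ha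
    have hweight : IsCoprime M (if Odd (a + 1) ∧ Even t then c₁ else 1) := by
      split_ifs with hodd
      · exact (hu.isCoprime_apply_c₁_of_odd hcop hodd.1).of_isCoprime_of_dvd_left ha
      · exact isCoprime_one_right
    rw [hu.apply_add_one_add] at h
    have hsub := (dvd_sub_right ((ha.mul_right _).mul_left _)).mp h
    exact hprev.dvd_of_dvd_mul_left (hc₂.dvd_of_dvd_mul_left (hweight.dvd_of_dvd_mul_left hsub))

end IsLehmerSequence

theorem stmt_4_general
    (ζ η : ℂ) (c₁ c₂ : ℤ)
    (hc₁ : (c₁ : ℂ) = (ζ + η) ^ 2) (hc₂ : (c₂ : ℂ) = ζ * η)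
    (hc₁0 : c₁ ≠ 0) (hc₂0 : c₂ ≠ 0) (hcop : IsCoprime c₁ c₂)
    (hru : ∀ k : ℕ, 0 < k → (ζ / η) ^ k ≠ 1)
    (u : ℕ → ℤ)
    (hu : ∀ k : ℕ, (u k : ℂ) =
      if Odd k then (ζ ^ k - η ^ k) / (ζ - η) else (ζ ^ k - η ^ k) / (ζ ^ 2 - η ^ 2))
    (ρ : ℕ → ℕ)
    (hρ : ∀ m : ℕ, 0 < m → Int.gcd (m : ℤ) c₂ = 1 →
      0 < ρ m ∧ (m : ℤ) ∣ u (ρ m) ∧ ∀ k : ℕ, 0 < k → (m : ℤ) ∣ u k → ρ m ≤ k) :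
    ∀ m k : ℕ, 0 < m → 0 < k →
      ((m : ℤ) ∣ u k ↔ Int.gcd (m : ℤ) c₂ = 1 ∧ ρ m ∣ k) := by
  intro m k hm hk
  have hη : η ≠ 0 := by
    rintro rfl
    exact hc₂0 (by exact_mod_cast hc₂.trans (mul_zero ζ))
  have hζη : ζ ≠ η := fun h => hru 1 one_pos (by rw [pow_one, h, div_self hη])
  have hadd : ζ + η ≠ 0 := fun h =>
    hc₁0 (by exact_mod_cast (show (c₁ : ℂ) = 0 by rw [hc₁, h]; ring))
  have hL := IsLehmerSequence.of_binet hc₁ hc₂ hζη hadd hu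
  constructor
  · intro hdvd
    have hgcd : Int.gcd m c₂ = 1 := Int.isCoprime_iff_gcd_eq_one.mp
      ((hL.isCoprime_apply_c₂ hcop hk).of_isCoprime_of_dvd_left hdvd)
    obtain ⟨hρpos, hρdvd, hρmin⟩ := hρ m hm hgcd
    have hmod : (m : ℤ) ∣ u (k % ρ m) :=
      hL.dvd_apply_of_dvd_apply_add hcop (hL.dvd_apply_mul hρdvd (k / ρ m))
        (by rwa [Nat.div_add_mod])
    refine ⟨hgcd, Nat.dvd_of_mod_eq_zero (Nat.eq_zero_of_not_pos fun hpos => ?_)⟩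
    exact absurd (hρmin _ hpos hmod) (Nat.not_le.mpr (Nat.mod_lt k hρpos))
  · rintro ⟨hgcd, j, rfl⟩
    exact hL.dvd_apply_mul (hρ m hm hgcd).2.1 j

/-- Let `(ũ_k)` be the Lehmer sequence associated to `ζ` and `η`.
Then for all integers `m, k ≥ 1`: `m ∣ ũ_k` if and only if `gcd(m, c₂) = 1` and
`ρ(m) ∣ k`, where `ρ` is the rank of appearance. -/
theorem stmt_4
    (ζ η : ℂ) (c₁ c₂ : ℤ)
    (hc₁ : (c₁ : ℂ) = (ζ + η) ^ 2) (hc₂ : (c₂ : ℂ) = ζ * η)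
    (hc₁0 : c₁ ≠ 0) (hc₂0 : c₂ ≠ 0) (hcop : IsCoprime c₁ c₂)
    (habs : ‖η‖ ≤ ‖ζ‖)
    (hru : ∀ k : ℕ, 0 < k → (ζ / η) ^ k ≠ 1)
    (u : ℕ → ℤ)
    (hu : ∀ k : ℕ, (u k : ℂ) =
      if Odd k then (ζ ^ k - η ^ k) / (ζ - η) else (ζ ^ k - η ^ k) / (ζ ^ 2 - η ^ 2))
    (ρ : ℕ → ℕ)
    (hρ : ∀ m : ℕ, 0 < m → Int.gcd (m : ℤ) c₂ = 1 →
      0 < ρ m ∧ (m : ℤ) ∣ u (ρ m) ∧ ∀ k : ℕ, 0 < k → (m : ℤ) ∣ u k → ρ m ≤ k) :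
    ∀ m k : ℕ, 0 < m → 0 < k →
      ((m : ℤ) ∣ u k ↔ Int.gcd (m : ℤ) c₂ = 1 ∧ ρ m ∣ k) :=
  stmt_4_general ζ η c₁ c₂ hc₁ hc₂ hc₁0 hc₂0 hcop hru u hu ρ hρ
end

section
/- Let (ũ_k)_{k≥0} be the Lehmer sequence associated to ζ and η. Then for every prime p not dividing 2c₂ and every integer k ≥ 1, ρ(p^k) = p^{max(k − κ(p), 0)}·ρ(p). -/
/-!
Work in the algebraic integers, where an integer divides another only if it does so in `ℤ`.
There `ζ ^ n - η ^ n = (ζ - η) ε_n ũ_n` with `ε_n ∈ {1, ζ + η}`, and the identity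
`ζ ^ n (ζ ^ a - η ^ a) = (ζ ^ (n + a) - η ^ (n + a)) - η ^ a (ζ ^ n - η ^ n)` shows that the
indices `n` with `p ∣ ũ_n` are closed under subtraction, hence are the multiples of `ρ(p)`.
Moreover `ũ_m ∣ ũ_(mt)`, and the cofactor divides (and for odd `t` equals)
`T = ∑ x ^ i y ^ (t - 1 - i)` with `x = ζ ^ m`, `y = η ^ m`. When `p ∣ ũ_m` we have
`x ≡ y mod p`, so `T ≡ t y ^ (t - 1) mod p` and `T ≡ p y ^ (p - 1) mod p²` for `t = p`; as `y` is
prime to `p`, this is the lifting-the-exponent law `ν_p(ũ_(mt)) = ν_p(ũ_m) + ν_p(t)`. Applied to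
`m = ρ(p)`, the least index with `ν_p ≥ k` is `p ^ (k - κ(p)) ρ(p)`.
-/

open Finset Polynomial

def ReflectsIntDvd (R : Type*) [CommRing R] : Prop :=
  ∀ ⦃a b : ℤ⦄, (b : R) ∣ (a : R) → b ∣ a

theorem reflectsIntDvd_integralClosure (K : Type*) [Field K] [CharZero K] :
    ReflectsIntDvd (integralClosure ℤ K) := by
  rintro a b ⟨r, hr⟩
  have hrK : (a : K) = b * r := by simpa using congrArg Subtype.val hr
  rcases eq_or_ne b 0 with rfl | hb
  · simp_all
  have hq : algebraMap ℚ K (a / b) = r := by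
    rw [map_div₀, eq_ratCast, eq_ratCast, Rat.cast_intCast, Rat.cast_intCast, hrK,
      mul_div_cancel_left₀ _ (Int.cast_ne_zero.mpr hb)]
  obtain ⟨n, hn⟩ := IsIntegrallyClosed.isIntegral_iff.mp
    ((isIntegral_algebraMap_iff (algebraMap ℚ K).injective).mp (hq ▸ r.2))
  refine ⟨n, ?_⟩
  have hn' : (n : ℚ) = a / b := hn
  rw [eq_div_iff (Int.cast_ne_zero.mpr hb)] at hn'
  exact_mod_cast (by linarith : (a : ℚ) = b * n)

theorem isIntegral_of_add_sq_eq_of_mul_eq {A : Type*} [CommRing A] {x y : A} {c₁ c₂ : ℤ}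
    (h₁ : (x + y) ^ 2 = c₁) (h₂ : x * y = c₂) : IsIntegral ℤ x := by
  refine IsIntegral.of_pow two_pos ⟨X ^ 2 - C (c₁ - 2 * c₂) * X + C (c₂ ^ 2), by monicity!, ?_⟩
  simp only [eval₂_add, eval₂_sub, eval₂_mul, eval₂_X_pow, eval₂_X, eval₂_C, algebraMap_int_eq,
    Int.coe_castRingHom, Int.cast_sub, Int.cast_mul, Int.cast_pow, Int.cast_ofNat, ← h₁, ← h₂]
  ring

theorem Nat.dvd_of_isLeast_of_sub_mem {S : Set ℕ} {r : ℕ} (hr : IsLeast {n | 0 < n ∧ n ∈ S} r)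
    (hS : ∀ a b, a ∈ S → a + b ∈ S → b ∈ S) {n : ℕ} (hn : n ∈ S) : r ∣ n := by
  induction n using Nat.strong_induction_on with
  | _ n ih =>
    obtain rfl | hn0 := Nat.eq_zero_or_pos n
    · exact dvd_zero r
    have hrn : r ≤ n := hr.2 ⟨hn0, hn⟩
    have hsub : r ∣ n - r :=
      ih (n - r) (by have := hr.1.1; omega) (hS r _ hr.1.2 (by rwa [Nat.add_sub_cancel' hrn]))
    simpa [Nat.sub_add_cancel hrn] using Nat.dvd_add hsub (dvd_refl r)

section Lehmer

variable {R : Type*} [CommRing R]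

theorem ReflectsIntDvd.dvd_of_dvd_pow_mul (hR : ReflectsIntDvd R) {ζ η : R} {c : ℤ}
    (hc : ζ * η = c) {a b : ℤ} (hb : IsCoprime b c) {k : ℕ} (h : (b : R) ∣ ζ ^ k * a) : b ∣ a := by
  have h' : (b : R) ∣ ((c ^ k * a : ℤ) : R) := by
    rw [Int.cast_mul, Int.cast_pow, ← hc, mul_pow, mul_right_comm]
    exact h.mul_right _
  exact hb.pow_right.dvd_of_dvd_mul_left (hR h')

theorem ReflectsIntDvd.natCast_ne_zero (hR : ReflectsIntDvd R) {n : ℕ} (hn : n ≠ 0) :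
    (n : R) ≠ 0 := fun h =>
  hn (by exact_mod_cast zero_dvd_iff.1 (hR (a := n) (b := 0) (by simp [h])))

def lehmerFactor (ζ η : R) (n : ℕ) : R := if Odd n then 1 else ζ + η

-- The Lehmer sequence without division: for even `n` the denominator `ζ ^ 2 - η ^ 2` of `ũ_n`
-- is `(ζ - η) (ζ + η)`.
def IsLehmerSeq (ζ η : R) (u : ℕ → ℤ) : Prop :=
  ∀ n, (ζ - η) * lehmerFactor ζ η n * u n = ζ ^ n - η ^ n

theorem lehmerFactor_of_odd (ζ η : R) {n : ℕ} (h : Odd n) : lehmerFactor ζ η n = 1 :=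
  if_pos h

theorem lehmerFactor_of_even (ζ η : R) {n : ℕ} (h : Even n) : lehmerFactor ζ η n = ζ + η :=
  if_neg (Nat.not_odd_iff_even.2 h)

theorem lehmerFactor_mul_of_odd (ζ η : R) (m : ℕ) {t : ℕ} (ht : Odd t) :
    lehmerFactor ζ η (m * t) = lehmerFactor ζ η m := by
  simp [lehmerFactor, Nat.odd_mul, ht]

variable {ζ η : R} {u : ℕ → ℤ}

theorem IsLehmerSeq.intCast_dvd_sub_pow (hL : IsLehmerSeq ζ η u) {b : ℤ} {n : ℕ} (h : b ∣ u n) :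
    (b : R) ∣ ζ ^ n - η ^ n :=
  hL n ▸ (Int.cast_dvd_cast _ _ h).mul_left _

theorem sub_ne_zero_of_pow_ne (hnd : ∀ n, 0 < n → ζ ^ n ≠ η ^ n) : ζ - η ≠ 0 :=
  sub_ne_zero.2 (by simpa using hnd 1 one_pos)

theorem IsLehmerSeq.intCast_ne_zero (hL : IsLehmerSeq ζ η u)
    (hnd : ∀ n, 0 < n → ζ ^ n ≠ η ^ n) {n : ℕ} (hn : 0 < n) : (u n : R) ≠ 0 := by
  intro h
  apply hnd n hn
  rw [← sub_eq_zero, ← hL n, h, mul_zero]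

theorem IsLehmerSeq.ne_zero (hL : IsLehmerSeq ζ η u) (hnd : ∀ n, 0 < n → ζ ^ n ≠ η ^ n)
    {n : ℕ} (hn : 0 < n) : u n ≠ 0 :=
  fun h => hL.intCast_ne_zero hnd hn (by rw [h, Int.cast_zero])

theorem add_ne_zero_of_pow_ne (hnd : ∀ n, 0 < n → ζ ^ n ≠ η ^ n) : ζ + η ≠ 0 :=
  fun h => hnd 2 two_pos (sub_eq_zero.1 (by linear_combination (ζ - η) * h))

variable [IsDomain R]

theorem lehmerFactor_ne_zero (hnd : ∀ n, 0 < n → ζ ^ n ≠ η ^ n) (n : ℕ) :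
    lehmerFactor ζ η n ≠ 0 := by
  unfold lehmerFactor
  split_ifs
  · exact one_ne_zero
  · exact add_ne_zero_of_pow_ne hnd

theorem IsLehmerSeq.intCast_dvd_of_dvd (hL : IsLehmerSeq ζ η u)
    (hnd : ∀ n, 0 < n → ζ ^ n ≠ η ^ n) {m n : ℕ} (h : m ∣ n) : (u m : R) ∣ u n := by
  have hζη := sub_ne_zero_of_pow_ne hnd
  have of_factor_eq : ∀ {m n : ℕ}, m ∣ n → lehmerFactor ζ η m = lehmerFactor ζ η n →
      (u m : R) ∣ u n := by
    rintro m _ ⟨k, rfl⟩ hf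
    have hdvd := sub_dvd_pow_sub_pow (ζ ^ m) (η ^ m) k
    rw [← pow_mul, ← pow_mul, ← hL, ← hL, ← hf] at hdvd
    exact (mul_dvd_mul_iff_left (mul_ne_zero hζη (lehmerFactor_ne_zero hnd m))).1 hdvd
  rcases Nat.even_or_odd m with hm | hm
  · have hn : Even n := even_iff_two_dvd.2 ((even_iff_two_dvd.1 hm).trans h)
    exact of_factor_eq h (by rw [lehmerFactor_of_even _ _ hm, lehmerFactor_of_even _ _ hn])
  rcases Nat.even_or_odd n with hn | hn
  · have h2m : (u m : R) ∣ u (2 * m) := by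
      obtain ⟨A, hA⟩ := hm.add_dvd_pow_add_pow ζ η
      refine ⟨A, mul_left_cancel₀ (mul_ne_zero hζη (lehmerFactor_ne_zero hnd (2 * m))) ?_⟩
      have e1 := hL m
      have e2 := hL (2 * m)
      rw [lehmerFactor_of_odd _ _ hm] at e1
      rw [lehmerFactor_of_even _ _ (even_two_mul m)] at e2 ⊢
      linear_combination e2 - (ζ + η) * A * e1 + (ζ ^ m - η ^ m) * hA
    refine h2m.trans (of_factor_eq ?_ ?_)
    · exact Nat.Coprime.mul_dvd_of_dvd_of_dvd (Nat.coprime_two_left.2 hm) (even_iff_two_dvd.1 hn) h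
    · rw [lehmerFactor_of_even _ _ (even_two_mul m), lehmerFactor_of_even _ _ hn]
  · exact of_factor_eq h (by rw [lehmerFactor_of_odd _ _ hm, lehmerFactor_of_odd _ _ hn])

theorem IsLehmerSeq.lehmerFactor_mul_eq_geomSum (hL : IsLehmerSeq ζ η u) (hζη : ζ - η ≠ 0)
    (m t : ℕ) : lehmerFactor ζ η (m * t) * u (m * t) =
      lehmerFactor ζ η m * u m * ∑ i ∈ range t, (ζ ^ m) ^ i * (η ^ m) ^ (t - 1 - i) := by
  refine mul_left_cancel₀ hζη ?_
  have hT := geom_sum₂_mul (ζ ^ m) (η ^ m) t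
  rw [← pow_mul, ← pow_mul] at hT
  linear_combination hL (m * t) - hT - (∑ i ∈ range t, (ζ ^ m) ^ i * (η ^ m) ^ (t - 1 - i)) * hL m

theorem IsLehmerSeq.dvd_of_dvd_of_dvd_add (hR : ReflectsIntDvd R) {c₂ : ℤ} (hc₂ : ζ * η = c₂)
    (hnd : ∀ n, 0 < n → ζ ^ n ≠ η ^ n) (hL : IsLehmerSeq ζ η u) {b : ℤ}
    (hb : IsCoprime b (2 * c₂)) {n a : ℕ} (hn : b ∣ u n) (hna : b ∣ u (n + a)) : b ∣ u a := by
  have hbc₂ : IsCoprime b c₂ := hb.of_mul_right_right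
  have key : ζ ^ n * lehmerFactor ζ η a * u a =
      lehmerFactor ζ η (n + a) * u (n + a) - η ^ a * lehmerFactor ζ η n * u n :=
    mul_left_cancel₀ (sub_ne_zero_of_pow_ne hnd)
      (by linear_combination ζ ^ n * hL a - hL (n + a) + η ^ a * hL n)
  have hdvd : (b : R) ∣ ζ ^ n * lehmerFactor ζ η a * u a := by
    rw [key]
    exact dvd_sub ((Int.cast_dvd_cast _ _ hna).mul_left _) ((Int.cast_dvd_cast _ _ hn).mul_left _)
  rcases Nat.even_or_odd a with ha | ha
  · rcases Nat.even_or_odd n with hn' | hn'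
    · have hn'a : Even (n + a) := hn'.add ha
      rw [lehmerFactor_of_even _ _ ha, lehmerFactor_of_even _ _ hn'a,
        lehmerFactor_of_even _ _ hn'] at key
      have key' : ζ ^ n * u a = u (n + a) - η ^ a * u n :=
        mul_left_cancel₀ (add_ne_zero_of_pow_ne hnd) (by linear_combination key)
      refine hR.dvd_of_dvd_pow_mul hc₂ hbc₂ (k := n) ?_
      rw [key']
      exact dvd_sub (Int.cast_dvd_cast _ _ hna) ((Int.cast_dvd_cast _ _ hn).mul_left _)
    · -- `ζ + η ∣ ζ ^ n + η ^ n` and `b ∣ ζ ^ n - η ^ n`, and these add up to `2 ζ ^ n`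
      rw [lehmerFactor_of_even _ _ ha] at hdvd
      obtain ⟨A, hA⟩ := hn'.add_dvd_pow_add_pow ζ η
      have hsub := hL.intCast_dvd_sub_pow hn
      refine (hb.of_mul_right_left).dvd_of_dvd_mul_left
        (hR.dvd_of_dvd_pow_mul hc₂ hbc₂ (k := 2 * n) ?_)
      have h2 : ζ ^ (2 * n) * ((2 * u a : ℤ) : R) =
          ζ ^ n * (ζ + η) * u a * A + ζ ^ n * u a * (ζ ^ n - η ^ n) := by
        push_cast
        linear_combination (ζ ^ n * u a) * hA
      rw [h2]
      exact dvd_add (hdvd.mul_right _) (hsub.mul_left _)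
  · rw [lehmerFactor_of_odd _ _ ha, mul_one] at hdvd
    exact hR.dvd_of_dvd_pow_mul hc₂ hbc₂ hdvd

theorem IsLehmerSeq.lehmerFactor_mul_intCast_eq_geomSum (hL : IsLehmerSeq ζ η u)
    (hnd : ∀ n, 0 < n → ζ ^ n ≠ η ^ n) {m t : ℕ} (hm : 0 < m) {q : ℤ}
    (hq : u (m * t) = u m * q) : lehmerFactor ζ η (m * t) * q =
      lehmerFactor ζ η m * ∑ i ∈ range t, (ζ ^ m) ^ i * (η ^ m) ^ (t - 1 - i) := by
  refine mul_left_cancel₀ (hL.intCast_ne_zero hnd hm) ?_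
  have h := hL.lehmerFactor_mul_eq_geomSum (sub_ne_zero_of_pow_ne hnd) m t
  rw [hq, Int.cast_mul] at h
  linear_combination h

theorem IsLehmerSeq.intCast_dvd_geomSum (hL : IsLehmerSeq ζ η u)
    (hnd : ∀ n, 0 < n → ζ ^ n ≠ η ^ n) {m t : ℕ} (hm : 0 < m) {q : ℤ}
    (hq : u (m * t) = u m * q) :
    (q : R) ∣ ∑ i ∈ range t, (ζ ^ m) ^ i * (η ^ m) ^ (t - 1 - i) := by
  have h := hL.lehmerFactor_mul_intCast_eq_geomSum hnd hm hq
  rcases Nat.even_or_odd m with hm' | hm'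
  · rw [lehmerFactor_of_even _ _ hm', lehmerFactor_of_even _ _ (hm'.mul_right t)] at h
    exact (mul_left_cancel₀ (add_ne_zero_of_pow_ne hnd) h).dvd
  · rw [lehmerFactor_of_odd _ _ hm', one_mul] at h
    exact Dvd.intro_left _ h

section LiftingTheExponent

variable {p : ℕ} [hp : Fact p.Prime] {c₂ : ℤ}

theorem IsLehmerSeq.padicValInt_mul_of_not_dvd (hR : ReflectsIntDvd R) (hc₂ : ζ * η = c₂)
    (hpc₂ : ¬ (p : ℤ) ∣ c₂) (hnd : ∀ n, 0 < n → ζ ^ n ≠ η ^ n) (hL : IsLehmerSeq ζ η u)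
    {m t : ℕ} (hm : 0 < m) (ht : 0 < t) (hpt : ¬ p ∣ t) (hpm : (p : ℤ) ∣ u m) :
    padicValInt p (u (m * t)) = padicValInt p (u m) := by
  have hpZ : Prime (p : ℤ) := Nat.prime_iff_prime_int.1 hp.out
  obtain ⟨q, hq⟩ := hR (hL.intCast_dvd_of_dvd hnd (dvd_mul_right m t))
  have hpq : ¬ (p : ℤ) ∣ q := by
    intro hpq
    have hpT := (Int.cast_dvd_cast _ _ hpq).trans (hL.intCast_dvd_geomSum hnd hm hq)
    rw [Int.cast_natCast, dvd_geom_sum₂_iff_of_dvd_sub (by simpa using hL.intCast_dvd_sub_pow hpm),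
      ← pow_mul] at hpT
    have : (p : ℤ) ∣ t := hR.dvd_of_dvd_pow_mul (by rw [mul_comm, hc₂])
      ((hpZ.coprime_iff_not_dvd).2 hpc₂) (k := m * (t - 1)) (by rw [mul_comm]; exact_mod_cast hpT)
    exact hpt (Int.natCast_dvd_natCast.1 this)
  rw [hq, padicValInt.mul (hL.ne_zero hnd hm) (right_ne_zero_of_mul (hq ▸ hL.ne_zero hnd (Nat.mul_pos hm ht))),
    padicValInt.eq_zero_of_not_dvd hpq, add_zero]

theorem IsLehmerSeq.padicValInt_mul_prime (hR : ReflectsIntDvd R) (hc₂ : ζ * η = c₂)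
    (hpc₂ : ¬ (p : ℤ) ∣ c₂) (hp2 : Odd p) (hnd : ∀ n, 0 < n → ζ ^ n ≠ η ^ n)
    (hL : IsLehmerSeq ζ η u) {m : ℕ} (hm : 0 < m) (hpm : (p : ℤ) ∣ u m) :
    padicValInt p (u (m * p)) = padicValInt p (u m) + 1 := by
  have hpZ : Prime (p : ℤ) := Nat.prime_iff_prime_int.1 hp.out
  obtain ⟨q, hq⟩ := hR (hL.intCast_dvd_of_dvd hnd (dvd_mul_right m p))
  have hqT : (q : R) = ∑ i ∈ range p, (ζ ^ m) ^ i * (η ^ m) ^ (p - 1 - i) := by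
    have h := hL.lehmerFactor_mul_intCast_eq_geomSum hnd hm hq
    rw [lehmerFactor_mul_of_odd _ _ _ hp2] at h
    exact mul_left_cancel₀ (lehmerFactor_ne_zero hnd m) h
  obtain ⟨b, hb⟩ : (p : R) ∣ ζ ^ m - η ^ m := by simpa using hL.intCast_dvd_sub_pow hpm
  have hx : ζ ^ m = η ^ m + p * b := by rw [← hb]; ring
  obtain ⟨q', rfl⟩ : (p : ℤ) ∣ q := hR (by
    rw [hqT, Int.cast_natCast]
    exact dvd_geom_sum₂_self (hb ▸ dvd_mul_right _ _))
  have hpq' : ¬ (p : ℤ) ∣ q' := by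
    rintro ⟨q'', rfl⟩
    have hsq := odd_sq_dvd_geom_sum₂_sub (η ^ m) b hp2
    rw [← hx, ← hqT] at hsq
    have hp2dvd : (p : R) * p ∣ p * (η ^ m) ^ (p - 1) := by
      have := dvd_sub (⟨q'', by push_cast; ring⟩ : (p : R) ^ 2 ∣ ((p * (p * q'') : ℤ) : R)) hsq
      rwa [sub_sub_cancel, sq] at this
    have hp1 := (mul_dvd_mul_iff_left (hR.natCast_ne_zero hp.out.ne_zero)).1 hp2dvd
    refine hpZ.not_dvd_one (hR.dvd_of_dvd_pow_mul (by rw [mul_comm, hc₂])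
      ((hpZ.coprime_iff_not_dvd).2 hpc₂) (k := m * (p - 1)) ?_)
    simpa [pow_mul] using hp1
  have hq'0 : q' ≠ 0 := by
    rintro rfl
    exact hL.ne_zero hnd (Nat.mul_pos hm hp.out.pos) (by rw [hq, mul_zero, mul_zero])
  rw [hq, padicValInt.mul (hL.ne_zero hnd hm) (mul_ne_zero (by exact_mod_cast hp.out.ne_zero) hq'0),
    padicValInt.mul (by exact_mod_cast hp.out.ne_zero) hq'0, padicValInt.self hp.out.one_lt,
    padicValInt.eq_zero_of_not_dvd hpq', add_zero]

theorem IsLehmerSeq.padicValInt_mul (hR : ReflectsIntDvd R) (hc₂ : ζ * η = c₂)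
    (hpc₂ : ¬ (p : ℤ) ∣ c₂) (hp2 : Odd p) (hnd : ∀ n, 0 < n → ζ ^ n ≠ η ^ n)
    (hL : IsLehmerSeq ζ η u) {m t : ℕ} (hm : 0 < m) (ht : 0 < t) (hpm : (p : ℤ) ∣ u m) :
    padicValInt p (u (m * t)) = padicValInt p (u m) + padicValNat p t := by
  obtain ⟨e, s, hps, rfl⟩ := Nat.exists_eq_pow_mul_and_not_dvd ht.ne' p hp.out.ne_one
  have hs : 0 < s := Nat.pos_of_ne_zero (by rintro rfl; simp at ht)
  have hdvd : ∀ e, (p : ℤ) ∣ u (m * p ^ e) :=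
    fun e => hpm.trans (hR (hL.intCast_dvd_of_dvd hnd (dvd_mul_right _ _)))
  have hpow : ∀ e, padicValInt p (u (m * p ^ e)) = padicValInt p (u m) + e := by
    intro e
    induction e with
    | zero => simp
    | succ e ih =>
      rw [pow_succ, ← mul_assoc, hL.padicValInt_mul_prime hR hc₂ hpc₂ hp2 hnd
        (Nat.mul_pos hm (pow_pos hp.out.pos e)) (hdvd e), ih, add_assoc]
  rw [← mul_assoc, hL.padicValInt_mul_of_not_dvd hR hc₂ hpc₂ hnd
      (Nat.mul_pos hm (pow_pos hp.out.pos e)) hs hps (hdvd e), hpow,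
    padicValNat.mul (pow_ne_zero _ hp.out.ne_zero) hs.ne', padicValNat.prime_pow,
    padicValNat.eq_zero_of_not_dvd hps, add_zero]

theorem IsLehmerSeq.rank_prime_pow (hR : ReflectsIntDvd R) (hc₂ : ζ * η = c₂)
    (hpc₂ : ¬ (p : ℤ) ∣ 2 * c₂) (hnd : ∀ n, 0 < n → ζ ^ n ≠ η ^ n) (hL : IsLehmerSeq ζ η u)
    {k r r' : ℕ} (hk : k ≠ 0) (hr : IsLeast {n | 0 < n ∧ (p : ℤ) ∣ u n} r)
    (hr' : IsLeast {n | 0 < n ∧ (p : ℤ) ^ k ∣ u n} r') :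
    r' = p ^ (k - padicValInt p (u r)) * r := by
  obtain ⟨⟨hr0, hpr⟩, hrmin⟩ := hr
  obtain ⟨⟨hr'0, hpr'⟩, hr'min⟩ := hr'
  have hpZ : Prime (p : ℤ) := Nat.prime_iff_prime_int.1 hp.out
  have hp2 : Odd p := hp.out.odd_of_ne_two (by rintro rfl; exact hpc₂ (dvd_mul_right 2 c₂))
  have hpc₂' : ¬ (p : ℤ) ∣ c₂ := fun h => hpc₂ (h.mul_left 2)
  have hval : ∀ {t}, 0 < t → padicValInt p (u (r * t)) = padicValInt p (u r) + padicValNat p t :=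
    fun ht => hL.padicValInt_mul hR hc₂ hpc₂' hp2 hnd hr0 ht hpr
  have hpow_dvd : ∀ {n}, 0 < n → ((p : ℤ) ^ k ∣ u n ↔ k ≤ padicValInt p (u n)) := fun hn => by
    simp [padicValInt_dvd_iff, hL.ne_zero hnd hn]
  obtain ⟨t, rfl⟩ : r ∣ r' :=
    Nat.dvd_of_isLeast_of_sub_mem (S := {n | (p : ℤ) ∣ u n}) ⟨⟨hr0, hpr⟩, hrmin⟩
      (fun a b ha hab => hL.dvd_of_dvd_of_dvd_add hR hc₂ hnd
        ((hpZ.coprime_iff_not_dvd).2 hpc₂) ha hab)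
      ((dvd_pow_self _ hk).trans hpr')
  have ht : 0 < t := Nat.pos_of_mul_pos_left hr'0
  apply le_antisymm
  · have hN : 0 < p ^ (k - padicValInt p (u r)) * r := Nat.mul_pos (pow_pos hp.out.pos _) hr0
    refine hr'min ⟨hN, (hpow_dvd hN).2 ?_⟩
    rw [mul_comm, hval (pow_pos hp.out.pos _), padicValNat.prime_pow]
    omega
  · rw [mul_comm r t]
    refine Nat.mul_le_mul_right r (Nat.le_of_dvd ht ((pow_dvd_pow p ?_).trans pow_padicValNat_dvd))
    have := (hpow_dvd hr'0).1 hpr'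
    rw [hval ht] at this
    omega

end LiftingTheExponent

end Lehmer

theorem exists_isLehmerSeq_integralClosure {K : Type*} [Field K] [CharZero K] {ζ η : K}
    {c₁ c₂ : ℤ} (hc₁ : (c₁ : K) = (ζ + η) ^ 2) (hc₂ : (c₂ : K) = ζ * η) (hc₂0 : c₂ ≠ 0)
    (hru : ∀ k : ℕ, 0 < k → (ζ / η) ^ k ≠ 1) {u : ℕ → ℤ}
    (hu : ∀ k : ℕ, (u k : K) =
      if Odd k then (ζ ^ k - η ^ k) / (ζ - η) else (ζ ^ k - η ^ k) / (ζ ^ 2 - η ^ 2)) :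
    ∃ z e : integralClosure ℤ K,
      z * e = c₂ ∧ (∀ n, 0 < n → z ^ n ≠ e ^ n) ∧ IsLehmerSeq z e u := by
  have hη : η ≠ 0 := by
    rintro rfl
    exact hc₂0 (by exact_mod_cast hc₂.trans (mul_zero ζ))
  have hnd : ∀ n, 0 < n → ζ ^ n ≠ η ^ n := fun n hn h =>
    hru n hn (by rw [div_pow, h, div_self (pow_ne_zero n hη)])
  have hsub : ζ - η ≠ 0 := sub_ne_zero.2 (by simpa using hnd 1 one_pos)
  have hsq : ζ ^ 2 - η ^ 2 ≠ 0 := sub_ne_zero.2 (hnd 2 two_pos)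
  refine ⟨⟨ζ, isIntegral_of_add_sq_eq_of_mul_eq hc₁.symm hc₂.symm⟩,
    ⟨η, isIntegral_of_add_sq_eq_of_mul_eq (y := ζ) (by rw [hc₁, add_comm]) (by rw [hc₂, mul_comm])⟩,
    Subtype.ext (by simp [hc₂]), fun n hn h => hnd n hn (by simpa using congrArg Subtype.val h),
    fun n => Subtype.ext ?_⟩
  have hun := hu n
  simp only [lehmerFactor]
  split_ifs at hun ⊢ with hn
  · simp [hun, mul_div_cancel₀ _ hsub]
  · simp only [Subalgebra.coe_mul, Subalgebra.coe_sub, Subalgebra.coe_add, Subalgebra.coe_pow,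
      SubringClass.coe_intCast]
    rw [hun]
    field_simp
    ring

theorem stmt_5_general
    (ζ η : ℂ) (c₁ c₂ : ℤ)
    (hc₁ : (c₁ : ℂ) = (ζ + η) ^ 2) (hc₂ : (c₂ : ℂ) = ζ * η)
    (hc₂0 : c₂ ≠ 0)
    (hru : ∀ k : ℕ, 0 < k → (ζ / η) ^ k ≠ 1)
    (u : ℕ → ℤ)
    (hu : ∀ k : ℕ, (u k : ℂ) =
      if Odd k then (ζ ^ k - η ^ k) / (ζ - η) else (ζ ^ k - η ^ k) / (ζ ^ 2 - η ^ 2))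
    (ρ : ℕ → ℕ)
    (hρ : ∀ m : ℕ, 0 < m → Int.gcd (m : ℤ) c₂ = 1 →
      0 < ρ m ∧ (m : ℤ) ∣ u (ρ m) ∧ ∀ k : ℕ, 0 < k → (m : ℤ) ∣ u k → ρ m ≤ k) :
    ∀ p : ℕ, p.Prime → ¬ ((p : ℤ) ∣ 2 * c₂) → ∀ k : ℕ, 1 ≤ k →
      ρ (p ^ k) = p ^ (k - padicValInt p (u (ρ p))) * ρ p := by
  intro p hp hpd k hk
  have : Fact p.Prime := ⟨hp⟩
  obtain ⟨z, e, hze, hnd, hL⟩ := exists_isLehmerSeq_integralClosure hc₁ hc₂ hc₂0 hru hu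
  have hrank : ∀ j, IsLeast {n | 0 < n ∧ (p : ℤ) ^ j ∣ u n} (ρ (p ^ j)) := by
    intro j
    have hgcd : Int.gcd ((p ^ j : ℕ) : ℤ) c₂ = 1 := by
      refine Int.isCoprime_iff_gcd_eq_one.1 ?_
      push_cast
      exact ((Nat.prime_iff_prime_int.1 hp).coprime_iff_not_dvd.2
        fun h => hpd (h.mul_left 2)).pow_left
    obtain ⟨h0, hdvd, hmin⟩ := hρ (p ^ j) (pow_pos hp.pos j) hgcd
    exact ⟨⟨h0, by exact_mod_cast hdvd⟩, fun n hn => hmin n hn.1 (by exact_mod_cast hn.2)⟩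
  simpa using hL.rank_prime_pow (reflectsIntDvd_integralClosure ℂ) hze hpd hnd (by omega)
    (by simpa using hrank 1) (hrank k)

/-- For every prime `p` not dividing `2c₂` and every integer `k ≥ 1`,
`ρ(p^k) = p^(max(k − κ(p), 0)) · ρ(p)`, where `κ(p) = ν_p(ũ_{ρ(p)})`. -/
theorem stmt_5
    (ζ η : ℂ) (c₁ c₂ : ℤ)
    (hc₁ : (c₁ : ℂ) = (ζ + η) ^ 2) (hc₂ : (c₂ : ℂ) = ζ * η)
    (hc₁0 : c₁ ≠ 0) (hc₂0 : c₂ ≠ 0) (hcop : IsCoprime c₁ c₂)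
    (habs : ‖η‖ ≤ ‖ζ‖)
    (hru : ∀ k : ℕ, 0 < k → (ζ / η) ^ k ≠ 1)
    (u : ℕ → ℤ)
    (hu : ∀ k : ℕ, (u k : ℂ) =
      if Odd k then (ζ ^ k - η ^ k) / (ζ - η) else (ζ ^ k - η ^ k) / (ζ ^ 2 - η ^ 2))
    (ρ : ℕ → ℕ)
    (hρ : ∀ m : ℕ, 0 < m → Int.gcd (m : ℤ) c₂ = 1 →
      0 < ρ m ∧ (m : ℤ) ∣ u (ρ m) ∧ ∀ k : ℕ, 0 < k → (m : ℤ) ∣ u k → ρ m ≤ k) :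
    ∀ p : ℕ, p.Prime → ¬ ((p : ℤ) ∣ 2 * c₂) → ∀ k : ℕ, 1 ≤ k →
      ρ (p ^ k) = p ^ (k - padicValInt p (u (ρ p))) * ρ p :=
  stmt_5_general ζ η c₁ c₂ hc₁ hc₂ hc₂0 hru u hu ρ hρ
end

section
/- Let (ũ_k)_{k≥0} be the Lehmer sequence associated to ζ and η. Then for every positive integer n and every finite set A ⊆ {1, …, n}, log lcm(ũ_a : a ∈ A) = Σ_{m ≥ 1, gcd(m,c₂)=1, ρ(m) ≤ n} Λ(m)·I_A(m), where Λ is the von Mangoldt function and I_A(m) := 1 if ρ(m) divides some a ∈ A and I_A(m) := 0 otherwise. -/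
/-!
Since `log L = ∑_{d ∣ L} Λ d`, it suffices to show that a prime power `q` divides
`L = lcm (ũ_a : a ∈ A)` iff `q` is coprime to `c₂` and `ρ q` divides some `a ∈ A`. A prime power
dividing an lcm divides one of its terms, the terms `ũ_k` (`k ≥ 1`) are coprime to `c₂`, and for `m`
coprime to `c₂` one has `m ∣ ũ_k ↔ ρ m ∣ k`. The last two facts are proved in `ℤ[√c₁]`, where
`ũ_k` (times `√c₁` for even `k`) satisfies `V (k + 2) = √c₁ V (k + 1) - c₂ V k`; the addition
formula and Cassini's identity for this recurrence make `{k | m ∣ V k}` closed under sums and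
differences.
-/

structure IsLucasSeq {R : Type*} [CommRing R] (α c : R) (V : ℕ → R) : Prop where
  zero : V 0 = 0
  one : V 1 = 1
  succ_succ : ∀ k, V (k + 2) = α * V (k + 1) - c * V k

namespace IsLucasSeq

variable {R : Type*} [CommRing R] {α c M : R} {V : ℕ → R}

theorem add_succ (hV : IsLucasSeq α c V) (a b : ℕ) :
    V (a + b + 1) = V (a + 1) * V (b + 1) - c * (V a * V b) := by
  induction b generalizing a with
  | zero => simp [hV.zero, hV.one]
  | succ b ih =>
    rw [show a + (b + 1) + 1 = a + 1 + b + 1 by omega, ih, hV.succ_succ a, hV.succ_succ b]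
    ring

theorem sq_sub_mul (hV : IsLucasSeq α c V) (k : ℕ) :
    V (k + 1) ^ 2 - V (k + 2) * V k = c ^ k := by
  induction k with
  | zero => simp [hV.zero, hV.one]
  | succ k ih =>
    have h := hV.succ_succ (k + 1)
    rw [show k + 1 + 2 = k + 3 by omega] at h
    linear_combination (-V (k + 1)) * h + c * ih + V (k + 2) * hV.succ_succ k

theorem dvd_add (hV : IsLucasSeq α c V) {a b : ℕ} (ha : M ∣ V a) (hb : M ∣ V b) :
    M ∣ V (a + b) := by
  cases a with
  | zero => simpa using hb
  | succ a =>
    rw [show a + 1 + b = a + b + 1 by omega, hV.add_succ]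
    exact dvd_sub (ha.mul_right _) ((hb.mul_left _).mul_left c)

theorem dvd_mul (hV : IsLucasSeq α c V) {r : ℕ} (hr : M ∣ V r) (t : ℕ) : M ∣ V (r * t) := by
  induction t with
  | zero => simp [hV.zero]
  | succ t ih => exact hV.dvd_add ih hr

theorem dvd_of_dvd_add (hV : IsLucasSeq α c V) (hM : IsCoprime M c) {a b : ℕ}
    (ha : M ∣ V (a + 1)) (hab : M ∣ V (a + 1 + b)) : M ∣ V b := by
  have hVab : M ∣ V a * V b := by
    refine hM.dvd_of_dvd_mul_left ?_
    have : c * (V a * V b) = V (a + 1) * V (b + 1) - V (a + 1 + b) := by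
      rw [show a + 1 + b = a + b + 1 by omega, hV.add_succ]; ring
    exact this ▸ dvd_sub (ha.mul_right _) hab
  -- Cassini's identity turns `M ∣ V (a + 1)` and `M ∣ V a * V b` into `M ∣ c ^ a * V b`.
  have hpow : c ^ a * V b = V (a + 1) * (V (a + 1) * V b) - V (a + 2) * (V a * V b) := by
    linear_combination (-V b) * hV.sq_sub_mul a
  refine (hM.pow_right (n := a)).dvd_of_dvd_mul_left ?_
  exact hpow ▸ dvd_sub ((ha.mul_right _).mul_left _) (hVab.mul_left _)

theorem dvd_iff_dvd (hV : IsLucasSeq α c V) (hM : IsCoprime M c) {r : ℕ} (hr : 0 < r)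
    (hMr : M ∣ V r) (hmin : ∀ k, 0 < k → M ∣ V k → r ≤ k) (k : ℕ) :
    M ∣ V k ↔ r ∣ k := by
  refine ⟨fun hk => ?_, fun ⟨t, ht⟩ => ht ▸ hV.dvd_mul hMr t⟩
  induction k using Nat.strong_induction_on with
  | _ k ih =>
    rcases Nat.eq_zero_or_pos k with rfl | hk0
    · exact dvd_zero r
    obtain ⟨b, rfl⟩ := Nat.exists_eq_add_of_le (hmin k hk0 hk)
    rw [← Nat.sub_add_cancel hr] at hMr hk
    exact (Nat.dvd_add_right dvd_rfl).mpr (ih b (by omega) (hV.dvd_of_dvd_add hM hMr hk))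

theorem isCoprime_succ (hV : IsLucasSeq α c V) (hα : IsCoprime α c) (k : ℕ) :
    IsCoprime (V (k + 1)) c := by
  induction k with
  | zero => simpa [hV.one] using isCoprime_one_left
  | succ k ih => rw [hV.succ_succ, IsCoprime.sub_mul_left_left_iff]; exact hα.mul_left ih

end IsLucasSeq

theorem Zsqrtd.isCoprime_of_intCast {d x y : ℤ} (h : IsCoprime (x : ℤ√d) (y : ℤ√d)) :
    IsCoprime x y := by
  obtain ⟨a, b, hab⟩ := h
  exact ⟨a.re, b.re, by simpa using congrArg Zsqrtd.re hab⟩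

structure IsLehmerSeq_s13 (d c : ℤ) (u : ℕ → ℤ) : Prop where
  zero : u 0 = 0
  one : u 1 = 1
  succ_succ : ∀ k, u (k + 2) = (if Odd k then d else 1) * u (k + 1) - c * u k

theorem isLehmerSeq_of_complex {ζ η : ℂ} {c₁ c₂ : ℤ} {u : ℕ → ℤ}
    (hc₁ : (c₁ : ℂ) = (ζ + η) ^ 2) (hc₂ : (c₂ : ℂ) = ζ * η) (hsub : ζ - η ≠ 0) (hadd : ζ + η ≠ 0)
    (hu : ∀ k : ℕ, (u k : ℂ) =
      if Odd k then (ζ ^ k - η ^ k) / (ζ - η) else (ζ ^ k - η ^ k) / (ζ ^ 2 - η ^ 2)) :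
    IsLehmerSeq_s13 c₁ c₂ u where
  zero := by simpa using hu 0
  one := by simpa [hsub] using hu 1
  succ_succ k := by
    have hsq : ζ ^ 2 - η ^ 2 = (ζ + η) * (ζ - η) := by ring
    apply Int.cast_injective (α := ℂ)
    rcases Nat.even_or_odd k with hk | hk
    · have hk1 : Odd (k + 1) := hk.add_one
      have hk2 : ¬ Odd (k + 2) := by simpa [Nat.odd_add_one, ← Nat.not_even_iff_odd] using hk
      simp only [Int.cast_sub, Int.cast_mul, Int.cast_one, hu, hk1, hk2,
        Nat.not_odd_iff_even.mpr hk, if_true, if_false, hc₂, hsq]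
      field_simp
      ring
    · have hk1 : ¬ Odd (k + 1) := by simpa [Nat.odd_add_one] using hk
      have hk2 : Odd (k + 2) := hk.add_even even_two
      simp only [Int.cast_sub, Int.cast_mul, hu, hk1, hk2, hk, if_true, if_false, hc₁, hc₂, hsq]
      field_simp
      ring

namespace IsLehmerSeq_s13

open Zsqrtd

variable {d c : ℤ} {u : ℕ → ℤ}

/-- Multiplying the even-index terms by `√d` turns a Lehmer sequence into a Lucas sequence with
parameters `(√d, c)`: for `u` as in the paper this is `(ζ ^ k - η ^ k) / (ζ - η)` with
`√d ↦ ζ + η`. -/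
def toZsqrtd (d : ℤ) (u : ℕ → ℤ) (k : ℕ) : ℤ√d := if Odd k then u k else (u k : ℤ√d) * sqrtd

theorem intCast_dvd_toZsqrtd_iff (m : ℤ) (k : ℕ) : (m : ℤ√d) ∣ toZsqrtd d u k ↔ m ∣ u k := by
  unfold toZsqrtd
  split_ifs <;> simp [intCast_dvd]

theorem isLucasSeq_toZsqrtd (hu : IsLehmerSeq_s13 d c u) :
    IsLucasSeq sqrtd (c : ℤ√d) (toZsqrtd d u) where
  zero := by simp [toZsqrtd, hu.zero]
  one := by simp [toZsqrtd, hu.one]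
  succ_succ k := by
    rcases Nat.even_or_odd k with hk | hk
    · have hk1 : Odd (k + 1) := hk.add_one
      have hk2 : ¬ Odd (k + 2) := by simpa [Nat.odd_add_one, ← Nat.not_even_iff_odd] using hk
      simp only [toZsqrtd, hk1, hk2, Nat.not_odd_iff_even.mpr hk, ↓reduceIte, hu.succ_succ k,
        one_mul, Int.cast_sub, Int.cast_mul]
      ring
    · have hk1 : ¬ Odd (k + 1) := by simpa [Nat.odd_add_one] using hk
      have hk2 : Odd (k + 2) := hk.add_even even_two
      simp only [toZsqrtd, hk1, hk2, hk, ↓reduceIte, hu.succ_succ k, Int.cast_sub, Int.cast_mul]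
      linear_combination -(u (k + 1) : ℤ√d) * dmuld

theorem isCoprime (hu : IsLehmerSeq_s13 d c u) (hdc : IsCoprime d c) {k : ℕ} (hk : 0 < k) :
    IsCoprime (u k) c := by
  have hsqrtd : IsCoprime (sqrtd : ℤ√d) c := by
    have h : IsCoprime (sqrtd * sqrtd : ℤ√d) c := by rw [dmuld]; exact hdc.intCast
    exact h.of_mul_left_left
  obtain ⟨k, rfl⟩ := Nat.exists_eq_add_one_of_ne_zero hk.ne'
  have h := hu.isLucasSeq_toZsqrtd.isCoprime_succ hsqrtd k
  unfold toZsqrtd at h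
  split_ifs at h
  · exact isCoprime_of_intCast h
  · exact isCoprime_of_intCast h.of_mul_left_left

theorem dvd_iff_dvd (hu : IsLehmerSeq_s13 d c u) {m : ℤ} (hm : IsCoprime m c) {r : ℕ} (hr : 0 < r)
    (hmr : m ∣ u r) (hmin : ∀ k, 0 < k → m ∣ u k → r ≤ k) (k : ℕ) : m ∣ u k ↔ r ∣ k := by
  simp only [← intCast_dvd_toZsqrtd_iff (d := d)] at hmr hmin ⊢
  exact hu.isLucasSeq_toZsqrtd.dvd_iff_dvd hm.intCast hr hmr hmin k

end IsLehmerSeq_s13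

theorem IsPrimePow.dvd_or_dvd_of_dvd_lcm {q a b : ℕ} (hq : IsPrimePow q) (h : q ∣ Nat.lcm a b) :
    q ∣ a ∨ q ∣ b := by
  rcases eq_or_ne a 0 with rfl | ha
  · exact Or.inl (dvd_zero q)
  rcases eq_or_ne b 0 with rfl | hb
  · exact Or.inr (dvd_zero q)
  obtain ⟨p, e, hp, -, rfl⟩ := (isPrimePow_nat_iff q).mp hq
  simp only [hp.pow_dvd_iff_le_factorization ha, hp.pow_dvd_iff_le_factorization hb,
    hp.pow_dvd_iff_le_factorization (Nat.lcm_ne_zero ha hb), Nat.factorization_lcm ha hb,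
    Finsupp.sup_apply, le_sup_iff] at h ⊢
  exact h

theorem IsPrimePow.exists_dvd_of_dvd_finset_lcm {ι : Type*} {q : ℕ} (hq : IsPrimePow q)
    {s : Finset ι} {f : ι → ℤ} (h : (q : ℤ) ∣ s.lcm f) : ∃ i ∈ s, (q : ℤ) ∣ f i := by
  classical
  induction s using Finset.induction_on with
  | empty =>
    exact absurd (Nat.dvd_one.mp (Int.natCast_dvd_natCast.mp (by simpa using h))) hq.ne_one
  | insert i s _ ih =>
    rw [Finset.lcm_insert, Int.natCast_dvd, Int.natAbs_lcm] at h
    rcases hq.dvd_or_dvd_of_dvd_lcm h with h | h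
    · exact ⟨i, Finset.mem_insert_self i s, Int.natCast_dvd.mpr h⟩
    · obtain ⟨j, hj, hqj⟩ := ih (by rwa [← Int.natCast_dvd] at h)
      exact ⟨j, Finset.mem_insert_of_mem hj, hqj⟩

section RankOfAppearance

variable {u : ℕ → ℤ} {c : ℤ} {ρ : ℕ → ℕ} {A : Finset ℕ}

theorem IsPrimePow.dvd_finset_lcm_iff {q : ℕ} (hq : IsPrimePow q)
    (hcop : ∀ a ∈ A, IsCoprime (u a) c)
    (hrank : ∀ m : ℕ, 0 < m → Int.gcd m c = 1 → ∀ a ∈ A, ((m : ℤ) ∣ u a ↔ ρ m ∣ a)) :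
    (q : ℤ) ∣ A.lcm u ↔ Int.gcd q c = 1 ∧ ∃ a ∈ A, ρ q ∣ a := by
  constructor
  · intro h
    obtain ⟨a, ha, hqa⟩ := hq.exists_dvd_of_dvd_finset_lcm h
    have hg : Int.gcd q c = 1 :=
      Int.isCoprime_iff_gcd_eq_one.mp ((hcop a ha).of_isCoprime_of_dvd_left hqa)
    exact ⟨hg, a, ha, (hrank q hq.pos hg a ha).mp hqa⟩
  · rintro ⟨hg, a, ha, hρa⟩
    exact ((hrank q hq.pos hg a ha).mpr hρa).trans (Finset.dvd_lcm ha)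

open ArithmeticFunction in
open scoped Classical in
theorem log_finset_lcm_eq_tsum {n : ℕ} (hA : A ⊆ Finset.Icc 1 n) (hu0 : ∀ a ∈ A, u a ≠ 0)
    (hcop : ∀ a ∈ A, IsCoprime (u a) c)
    (hrank : ∀ m : ℕ, 0 < m → Int.gcd m c = 1 → ∀ a ∈ A, ((m : ℤ) ∣ u a ↔ ρ m ∣ a)) :
    Real.log ((A.lcm u : ℤ) : ℝ) =
      ∑' m : ℕ, if 0 < m ∧ Int.gcd (m : ℤ) c = 1 ∧ ρ m ≤ n then
        Λ m * (if ∃ a ∈ A, ρ m ∣ a then 1 else 0) else 0 := by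
  set L := (A.lcm u).natAbs
  have hL : L ≠ 0 := Int.natAbs_ne_zero.mpr (Finset.lcm_ne_zero_iff.mpr hu0)
  have hρn : ∀ m, ∀ a ∈ A, ρ m ∣ a → ρ m ≤ n := fun m a ha hρa =>
    (Nat.le_of_dvd (Finset.mem_Icc.mp (hA ha)).1 hρa).trans (Finset.mem_Icc.mp (hA ha)).2
  have hterm : ∀ m : ℕ, (if 0 < m ∧ Int.gcd (m : ℤ) c = 1 ∧ ρ m ≤ n then
      Λ m * (if ∃ a ∈ A, ρ m ∣ a then 1 else 0) else 0) = if m ∈ L.divisors then Λ m else 0 := by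
    intro m
    by_cases hΛ : Λ m = 0
    · simp [hΛ]
    have hm := vonMangoldt_ne_zero_iff.mp hΛ
    have hmem : m ∈ L.divisors ↔ Int.gcd m c = 1 ∧ ∃ a ∈ A, ρ m ∣ a := by
      rw [Nat.mem_divisors, ← Int.natCast_dvd, hm.dvd_finset_lcm_iff hcop hrank, and_iff_left hL]
    have hm0 := hm.pos
    split_ifs <;> grind
  rw [tsum_congr hterm, tsum_eq_sum (s := L.divisors) (fun m hm => if_neg hm),
    Finset.sum_congr rfl (fun m hm => if_pos hm), vonMangoldt_sum, Nat.cast_natAbs, Int.cast_abs,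
    Real.log_abs]

end RankOfAppearance

open scoped Classical in
theorem stmt_13_general
    (ζ η : ℂ) (c₁ c₂ : ℤ)
    (hc₁ : (c₁ : ℂ) = (ζ + η) ^ 2) (hc₂ : (c₂ : ℂ) = ζ * η)
    (hc₁0 : c₁ ≠ 0) (hcop : IsCoprime c₁ c₂)
    (u : ℕ → ℤ)
    (hu : ∀ k : ℕ, (u k : ℂ) =
      if Odd k then (ζ ^ k - η ^ k) / (ζ - η) else (ζ ^ k - η ^ k) / (ζ ^ 2 - η ^ 2))
    (hu0 : ∀ k : ℕ, 0 < k → u k ≠ 0)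
    (ρ : ℕ → ℕ)
    (hρ : ∀ m : ℕ, 0 < m → Int.gcd (m : ℤ) c₂ = 1 →
      0 < ρ m ∧ (m : ℤ) ∣ u (ρ m) ∧ ∀ k : ℕ, 0 < k → (m : ℤ) ∣ u k → ρ m ≤ k) :
    ∀ n : ℕ, 0 < n → ∀ A : Finset ℕ, A ⊆ Finset.Icc 1 n →
      Real.log ((A.lcm u : ℤ) : ℝ) =
        ∑' m : ℕ, if 0 < m ∧ Int.gcd (m : ℤ) c₂ = 1 ∧ ρ m ≤ n then
          ArithmeticFunction.vonMangoldt m * (if ∃ a ∈ A, ρ m ∣ a then 1 else 0)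
        else 0 := by
  intro n _ A hA
  have hsub : ζ - η ≠ 0 := fun h => hu0 1 one_pos (by simpa [h] using hu 1)
  have hadd : ζ + η ≠ 0 := fun h => hc₁0 (by simpa [h] using hc₁)
  have hL : IsLehmerSeq_s13 c₁ c₂ u := isLehmerSeq_of_complex hc₁ hc₂ hsub hadd hu
  have hpos : ∀ a ∈ A, 0 < a := fun a ha => (Finset.mem_Icc.mp (hA ha)).1
  refine log_finset_lcm_eq_tsum hA (fun a ha => hu0 a (hpos a ha))
    (fun a ha => hL.isCoprime hcop (hpos a ha)) fun m hm hg a _ => ?_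
  obtain ⟨hρ0, hρm, hρmin⟩ := hρ m hm hg
  exact hL.dvd_iff_dvd (Int.isCoprime_iff_gcd_eq_one.mpr hg) hρ0 hρm hρmin a

open scoped Classical in
/-- For every positive integer `n` and every `A ⊆ {1, …, n}`,
`log lcm(ũ_a : a ∈ A) = Σ_{m ≥ 1, gcd(m,c₂)=1, ρ(m) ≤ n} Λ(m)·I_A(m)`,
where `I_A(m) = 1` if `ρ(m)` divides some `a ∈ A` and `0` otherwise. -/
theorem stmt_13
    (ζ η : ℂ) (c₁ c₂ : ℤ)
    (hc₁ : (c₁ : ℂ) = (ζ + η) ^ 2) (hc₂ : (c₂ : ℂ) = ζ * η)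
    (hc₁0 : c₁ ≠ 0) (hc₂0 : c₂ ≠ 0) (hcop : IsCoprime c₁ c₂)
    (habs : ‖η‖ ≤ ‖ζ‖)
    (hru : ∀ k : ℕ, 0 < k → (ζ / η) ^ k ≠ 1)
    (u : ℕ → ℤ)
    (hu : ∀ k : ℕ, (u k : ℂ) =
      if Odd k then (ζ ^ k - η ^ k) / (ζ - η) else (ζ ^ k - η ^ k) / (ζ ^ 2 - η ^ 2))
    (hu0 : ∀ k : ℕ, 0 < k → u k ≠ 0)
    (ρ : ℕ → ℕ)
    (hρ : ∀ m : ℕ, 0 < m → Int.gcd (m : ℤ) c₂ = 1 →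
      0 < ρ m ∧ (m : ℤ) ∣ u (ρ m) ∧ ∀ k : ℕ, 0 < k → (m : ℤ) ∣ u k → ρ m ≤ k) :
    ∀ n : ℕ, 0 < n → ∀ A : Finset ℕ, A ⊆ Finset.Icc 1 n →
      Real.log ((A.lcm u : ℤ) : ℝ) =
        ∑' m : ℕ, if 0 < m ∧ Int.gcd (m : ℤ) c₂ = 1 ∧ ρ m ≤ n then
          ArithmeticFunction.vonMangoldt m * (if ∃ a ∈ A, ρ m ∣ a then 1 else 0)
        else 0 :=
  stmt_13_general ζ η c₁ c₂ hc₁ hc₂ hc₁0 hcop u hu hu0 ρ hρ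
end

section
/- Let (ũ_k)_{k≥0} be the Lehmer sequence associated to ζ and η, let n be a positive integer, δ ∈ [0,1], and let A be a random set in B(n, δ). Then for all positive integers m and ℓ with gcd(mℓ, c₂) = 1, E(I_A(m)·I_A(ℓ)) = 1 − (1 − δ)^{⌊n/ρ(m)⌋} − (1 − δ)^{⌊n/ρ(ℓ)⌋} + (1 − δ)^{⌊n/ρ(m)⌋ + ⌊n/ρ(ℓ)⌋ − ⌊n/lcm(ρ(m),ρ(ℓ))⌋}, where I_A(m) := 1 if ρ(m) divides some a ∈ A and I_A(m) := 0 otherwise. -/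
/-!
Let `M` and `L` be the multiples of `ρ m` and of `ρ ℓ` in `[1, n]`. Then
`I_A(m) I_A(ℓ) = 1 - [A ∩ M = ∅] - [A ∩ L = ∅] + [A ∩ (M ∪ L) = ∅]`, and a random set of
`B(n, δ)` avoids a fixed set `S` with probability `(1 - δ) ^ #S`. Inclusion–exclusion gives
`#(M ∪ L) = ⌊n / ρ m⌋ + ⌊n / ρ ℓ⌋ - ⌊n / lcm (ρ m) (ρ ℓ)⌋`.
-/

open Finset

section RandomSubset

variable {α R : Type*} [CommRing R] (s : Finset α) (δ : R)
  (p q : α → Prop) [DecidablePred p] [DecidablePred q]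

theorem sum_powerset_weight_mul_ite_forall_not :
    ∑ A ∈ s.powerset, δ ^ #A * (1 - δ) ^ (#s - #A) * (if ∀ a ∈ A, ¬ p a then (1 : R) else 0) =
      (1 - δ) ^ #(s.filter p) := by
  have hfilter : s.powerset.filter (fun A => ∀ a ∈ A, ¬ p a) = (s.filter (¬ p ·)).powerset := by
    ext A
    simp only [mem_filter, mem_powerset, subset_iff]
    grind
  have hcard : #s = #(s.filter p) + #(s.filter (¬ p ·)) := (card_filter_add_card_filter_not p).symm
  have hweight : ∀ A ∈ (s.filter (¬ p ·)).powerset, δ ^ #A * (1 - δ) ^ (#s - #A) =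
      (1 - δ) ^ #(s.filter p) * (δ ^ #A * (1 - δ) ^ (#(s.filter (¬ p ·)) - #A)) := by
    intro A hA
    have hle := card_le_card (mem_powerset.mp hA)
    rw [hcard, Nat.add_sub_assoc hle, pow_add]
    ring
  simp only [mul_ite, mul_one, mul_zero]
  rw [sum_ite, sum_const_zero, add_zero, hfilter, sum_congr rfl hweight, ← mul_sum,
    sum_pow_mul_eq_add_pow, add_sub_cancel, one_pow, mul_one]

theorem ite_exists_mul_ite_exists (A : Finset α) :
    (if ∃ a ∈ A, p a then (1 : R) else 0) * (if ∃ a ∈ A, q a then 1 else 0) =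
      1 - (if ∀ a ∈ A, ¬ p a then 1 else 0) - (if ∀ a ∈ A, ¬ q a then 1 else 0) +
        (if ∀ a ∈ A, ¬ (p a ∨ q a) then 1 else 0) := by
  split_ifs <;> grind

theorem sum_powerset_weight_mul_ite_exists_mul_ite_exists :
    ∑ A ∈ s.powerset, δ ^ #A * (1 - δ) ^ (#s - #A) *
        ((if ∃ a ∈ A, p a then (1 : R) else 0) * (if ∃ a ∈ A, q a then 1 else 0)) =
      1 - (1 - δ) ^ #(s.filter p) - (1 - δ) ^ #(s.filter q) +
        (1 - δ) ^ #(s.filter fun a => p a ∨ q a) := by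
  simp only [ite_exists_mul_ite_exists, mul_add, mul_sub, mul_one, sum_add_distrib,
    sum_sub_distrib, sum_powerset_weight_mul_ite_forall_not, sum_pow_mul_eq_add_pow,
    add_sub_cancel, one_pow, sum_powerset_weight_mul_ite_forall_not s δ (fun a => p a ∨ q a)]

end RandomSubset

theorem Nat.Ioc_filter_dvd_or_dvd_card_eq (n r t : ℕ) :
    #{x ∈ Ioc 0 n | r ∣ x ∨ t ∣ x} = n / r + n / t - n / r.lcm t := by
  have h := card_union_add_card_inter {x ∈ Ioc 0 n | r ∣ x} {x ∈ Ioc 0 n | t ∣ x}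
  simp only [← filter_or, ← filter_and, ← Nat.lcm_dvd_iff, Nat.Ioc_filter_dvd_card_eq_div] at h
  omega

open scoped Classical in
theorem stmt_15_general
    (c₂ : ℤ)
    (ρ : ℕ → ℕ) :
    ∀ n : ℕ, 0 < n → ∀ δ : ℝ, δ ∈ Set.Icc (0 : ℝ) 1 →
      ∀ m ℓ : ℕ, 0 < m → 0 < ℓ → Int.gcd ((m * ℓ : ℕ) : ℤ) c₂ = 1 →
        (∑ A ∈ (Finset.Icc 1 n).powerset,
            δ ^ A.card * (1 - δ) ^ (n - A.card) *
              ((if ∃ a ∈ A, ρ m ∣ a then (1 : ℝ) else 0) *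
               (if ∃ a ∈ A, ρ ℓ ∣ a then (1 : ℝ) else 0))) =
          1 - (1 - δ) ^ (n / ρ m) - (1 - δ) ^ (n / ρ ℓ)
            + (1 - δ) ^ (n / ρ m + n / ρ ℓ - n / Nat.lcm (ρ m) (ρ ℓ)) := by
  intro n _ δ _ m ℓ _ _ _
  have h := sum_powerset_weight_mul_ite_exists_mul_ite_exists (Ioc 0 n) δ (ρ m ∣ ·) (ρ ℓ ∣ ·)
  -- `Icc 1 n` and `Ioc 0 n` agree definitionally
  rwa [Nat.card_Ioc, Nat.sub_zero, Nat.Ioc_filter_dvd_card_eq_div, Nat.Ioc_filter_dvd_card_eq_div,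
    Nat.Ioc_filter_dvd_or_dvd_card_eq] at h

open scoped Classical in
/-- For a random set `A` in `B(n, δ)` and all positive integers
`m, ℓ` with `gcd(mℓ, c₂) = 1`,
`E(I_A(m)·I_A(ℓ)) = 1 − (1−δ)^⌊n/ρ(m)⌋ − (1−δ)^⌊n/ρ(ℓ)⌋
  + (1−δ)^(⌊n/ρ(m)⌋ + ⌊n/ρ(ℓ)⌋ − ⌊n/lcm(ρ(m),ρ(ℓ))⌋)`. -/
theorem stmt_15
    (ζ η : ℂ) (c₁ c₂ : ℤ)
    (hc₁ : (c₁ : ℂ) = (ζ + η) ^ 2) (hc₂ : (c₂ : ℂ) = ζ * η)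
    (hc₁0 : c₁ ≠ 0) (hc₂0 : c₂ ≠ 0) (hcop : IsCoprime c₁ c₂)
    (habs : ‖η‖ ≤ ‖ζ‖)
    (hru : ∀ k : ℕ, 0 < k → (ζ / η) ^ k ≠ 1)
    (u : ℕ → ℤ)
    (hu : ∀ k : ℕ, (u k : ℂ) =
      if Odd k then (ζ ^ k - η ^ k) / (ζ - η) else (ζ ^ k - η ^ k) / (ζ ^ 2 - η ^ 2))
    (ρ : ℕ → ℕ)
    (hρ : ∀ m : ℕ, 0 < m → Int.gcd (m : ℤ) c₂ = 1 →
      0 < ρ m ∧ (m : ℤ) ∣ u (ρ m) ∧ ∀ k : ℕ, 0 < k → (m : ℤ) ∣ u k → ρ m ≤ k) :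
    ∀ n : ℕ, 0 < n → ∀ δ : ℝ, δ ∈ Set.Icc (0 : ℝ) 1 →
      ∀ m ℓ : ℕ, 0 < m → 0 < ℓ → Int.gcd ((m * ℓ : ℕ) : ℤ) c₂ = 1 →
        (∑ A ∈ (Finset.Icc 1 n).powerset,
            δ ^ A.card * (1 - δ) ^ (n - A.card) *
              ((if ∃ a ∈ A, ρ m ∣ a then (1 : ℝ) else 0) *
               (if ∃ a ∈ A, ρ ℓ ∣ a then (1 : ℝ) else 0))) =
          1 - (1 - δ) ^ (n / ρ m) - (1 - δ) ^ (n / ρ ℓ)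
            + (1 - δ) ^ (n / ρ m + n / ρ ℓ - n / Nat.lcm (ρ m) (ρ ℓ)) :=
  stmt_15_general c₂ ρ
end

section
/- Let (ũ_k)_{k≥0} be the Lehmer sequence associated to ζ and η. There exists a constant C > 0, depending only on ζ and η, such that for every integer n ≥ 2 and every δ ∈ [0,1], if A is a random set in B(n, δ) and X := log lcm(ũ_a : a ∈ A), then V(X) ≤ C·δ·n³·log n, where V denotes variance. -/
/-!
By the Efron–Stein inequality for `B(n, δ)`, the variance of `X` is at most `δ ∑ₐ Mₐ²`, where
`Mₐ` bounds the change of `X` when `a` is added to or removed from `A`. Adding `a` multiplies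
the lcm by a divisor of `ũₐ`, so `Mₐ = log |ũₐ| = O(a)` because the Lehmer sequence grows at most
exponentially. Hence `V(X) = O(δ ∑_{a ≤ n} a²) = O(δ n³)`.
-/

open Finset Real

section Bernoulli

variable {α : Type*}

/-- The expectation of `f A` for a random set `A ∈ B(S, δ)`. -/
def bernoulliExpect (δ : ℝ) (S : Finset α) (f : Finset α → ℝ) : ℝ :=
  ∑ A ∈ S.powerset, δ ^ #A * (1 - δ) ^ (#S - #A) * f A

def bernoulliVar (δ : ℝ) (S : Finset α) (f : Finset α → ℝ) : ℝ :=
  bernoulliExpect δ S (fun A => f A ^ 2) - bernoulliExpect δ S f ^ 2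

variable {δ : ℝ} {S : Finset α}

theorem bernoulliExpect_const (δ : ℝ) (S : Finset α) (c : ℝ) :
    bernoulliExpect δ S (fun _ => c) = c := by
  rw [bernoulliExpect, ← sum_mul, sum_pow_mul_eq_add_pow, add_sub_cancel, one_pow, one_mul]

theorem bernoulliExpect_sub (f g : Finset α → ℝ) :
    bernoulliExpect δ S (fun A => f A - g A) = bernoulliExpect δ S f - bernoulliExpect δ S g := by
  simp only [bernoulliExpect, mul_sub, sum_sub_distrib]

theorem abs_bernoulliExpect_le (h0 : 0 ≤ δ) (h1 : δ ≤ 1) {f : Finset α → ℝ} {M : ℝ}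
    (hf : ∀ A ⊆ S, |f A| ≤ M) : |bernoulliExpect δ S f| ≤ M := by
  calc |bernoulliExpect δ S f|
      ≤ ∑ A ∈ S.powerset, |δ ^ #A * (1 - δ) ^ (#S - #A) * f A| := abs_sum_le_sum_abs _ _
    _ ≤ bernoulliExpect δ S (fun _ => M) := by
        refine sum_le_sum fun A hA => ?_
        have hw : 0 ≤ δ ^ #A * (1 - δ) ^ (#S - #A) := by
          have : 0 ≤ 1 - δ := by linarith
          positivity
        rw [abs_mul, abs_of_nonneg hw]
        exact mul_le_mul_of_nonneg_left (hf A (mem_powerset.1 hA)) hw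
    _ = M := bernoulliExpect_const δ S M

variable [DecidableEq α]

theorem bernoulliExpect_insert {j : α} {T : Finset α} (hj : j ∉ T) (f : Finset α → ℝ) :
    bernoulliExpect δ (insert j T) f =
      (1 - δ) * bernoulliExpect δ T f + δ * bernoulliExpect δ T (fun A => f (insert j A)) := by
  rw [bernoulliExpect, sum_powerset_insert hj, bernoulliExpect, bernoulliExpect, mul_sum, mul_sum,
    card_insert_of_notMem hj]
  congr 1
  · refine sum_congr rfl fun A hA => ?_
    rw [Nat.sub_add_comm (card_le_card (mem_powerset.1 hA)), pow_succ]
    ring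
  · refine sum_congr rfl fun A hA => ?_
    rw [card_insert_of_notMem fun hjA => hj (mem_powerset.1 hA hjA), Nat.add_sub_add_right,
      pow_succ]
    ring

/-- Law of total variance, conditioning on whether `j ∈ A`. -/
theorem bernoulliVar_insert {j : α} {T : Finset α} (hj : j ∉ T) (f : Finset α → ℝ) :
    bernoulliVar δ (insert j T) f =
      (1 - δ) * bernoulliVar δ T f + δ * bernoulliVar δ T (fun A => f (insert j A)) +
        δ * (1 - δ) * (bernoulliExpect δ T f - bernoulliExpect δ T (fun A => f (insert j A))) ^ 2 := by
  simp only [bernoulliVar, bernoulliExpect_insert hj]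
  ring

/-- Efron–Stein inequality for `B(S, δ)`. -/
theorem bernoulliVar_le_sum_sq (h0 : 0 ≤ δ) (h1 : δ ≤ 1) (M : α → ℝ) :
    ∀ (S : Finset α) (f : Finset α → ℝ),
      (∀ i ∈ S, ∀ A ⊆ S, |f (insert i A) - f (A.erase i)| ≤ M i) →
      bernoulliVar δ S f ≤ δ * ∑ i ∈ S, M i ^ 2 := by
  intro S
  induction S using Finset.induction_on with
  | empty => intro f _; simp [bernoulliVar, bernoulliExpect]
  | insert j T hj ih =>
    intro f hf
    have hVar : bernoulliVar δ T f ≤ δ * ∑ i ∈ T, M i ^ 2 :=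
      ih f fun i hi A hA => hf i (mem_insert_of_mem hi) A (hA.trans (subset_insert j T))
    have hVar_insert : bernoulliVar δ T (fun A => f (insert j A)) ≤ δ * ∑ i ∈ T, M i ^ 2 := by
      refine ih _ fun i hi A hA => ?_
      have hij : i ≠ j := fun h => hj (h ▸ hi)
      rw [insert_comm j i, ← erase_insert_of_ne hij.symm]
      exact hf i (mem_insert_of_mem hi) _ (insert_subset_insert j hA)
    have hDiff : |bernoulliExpect δ T f - bernoulliExpect δ T (fun A => f (insert j A))| ≤ M j := by
      rw [abs_sub_comm, ← bernoulliExpect_sub]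
      refine abs_bernoulliExpect_le h0 h1 fun A hA => ?_
      have h := hf j (mem_insert_self j T) A (hA.trans (subset_insert j T))
      rwa [erase_eq_of_notMem fun hjA => hj (hA hjA)] at h
    have hDiff_sq := sq_le_sq' (abs_le.1 hDiff).1 (abs_le.1 hDiff).2
    rw [bernoulliVar_insert hj, sum_insert hj]
    have : 0 ≤ 1 - δ := by linarith
    nlinarith [mul_le_mul_of_nonneg_left hVar this, mul_le_mul_of_nonneg_left hVar_insert h0,
      mul_le_mul_of_nonneg_left hDiff_sq (mul_nonneg h0 this), sq_nonneg (M j), mul_nonneg h0 h0]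

end Bernoulli

theorem log_intCast_le_log_of_dvd {a b : ℤ} (ha : a ≠ 0) (hab : a ∣ b) (hb : b ≠ 0) :
    log a ≤ log b := by
  rw [← log_abs, ← log_abs (b : ℝ), ← Int.cast_abs, ← Int.cast_abs]
  refine log_le_log (by positivity) ?_
  exact_mod_cast Int.le_of_dvd (abs_pos.2 hb) ((abs_dvd_abs a b).2 hab)

theorem abs_log_lcm_sub_log_le {x m : ℤ} (hx : x ≠ 0) (hm : m ≠ 0) :
    |log (GCDMonoid.lcm x m : ℤ) - log m| ≤ log x := by
  have hlcm : GCDMonoid.lcm x m ≠ 0 := by simp [hx, hm]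
  have hlower := log_intCast_le_log_of_dvd hm (dvd_lcm_right x m) hlcm
  have hupper := log_intCast_le_log_of_dvd hlcm (lcm_dvd (dvd_mul_right x m) (dvd_mul_left m x))
    (mul_ne_zero hx hm)
  rw [Int.cast_mul, log_mul (by exact_mod_cast hx) (by exact_mod_cast hm)] at hupper
  rw [abs_of_nonneg (sub_nonneg.2 hlower)]
  linarith

theorem abs_log_lcm_insert_sub_log_lcm_erase_le {α : Type*} [DecidableEq α] (u : α → ℤ)
    {i : α} {A : Finset α} (hu : ∀ a ∈ insert i A, u a ≠ 0) :
    |log ((insert i A).lcm u : ℤ) - log ((A.erase i).lcm u : ℤ)| ≤ log (u i) := by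
  have hA : insert i A = insert i (A.erase i) := by
    ext a; by_cases h : a = i <;> simp [h]
  have hm : (A.erase i).lcm u ≠ 0 := by
    rw [Ne, Finset.lcm_eq_zero_iff]
    rintro ⟨a, ha, h0⟩
    exact hu a (mem_insert_of_mem (mem_of_mem_erase ha)) h0
  rw [hA, lcm_insert]
  exact abs_log_lcm_sub_log_le (hu i (mem_insert_self i A)) hm

theorem norm_pow_sub_pow_le (ζ η : ℂ) (k : ℕ) :
    ‖ζ ^ k - η ^ k‖ ≤ 2 * max ‖ζ‖ ‖η‖ ^ k := by
  calc ‖ζ ^ k - η ^ k‖ ≤ ‖ζ‖ ^ k + ‖η‖ ^ k := by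
        rw [← norm_pow, ← norm_pow]; exact norm_sub_le _ _
    _ ≤ max ‖ζ‖ ‖η‖ ^ k + max ‖ζ‖ ‖η‖ ^ k := by
        gcongr
        exacts [le_max_left _ _, le_max_right _ _]
    _ = 2 * max ‖ζ‖ ‖η‖ ^ k := by ring

/-- The denominators are nonzero because otherwise `ũ₁ = 0` or `ũ₂ = 0` (by `x / 0 = 0`). -/
theorem exists_abs_lehmer_le_pow {ζ η : ℂ} {u : ℕ → ℤ}
    (hu : ∀ k : ℕ, (u k : ℂ) =
      if Odd k then (ζ ^ k - η ^ k) / (ζ - η) else (ζ ^ k - η ^ k) / (ζ ^ 2 - η ^ 2))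
    (hu0 : ∀ k : ℕ, 0 < k → u k ≠ 0) :
    ∃ K : ℝ, 2 ≤ K ∧ ∀ k : ℕ, 0 < k → |(u k : ℝ)| ≤ K ^ k := by
  have hd₁ : ζ - η ≠ 0 := fun h => hu0 1 one_pos (by simpa [h] using hu 1)
  have hd₂ : ζ ^ 2 - η ^ 2 ≠ 0 := fun h => hu0 2 two_pos (by simpa [h] using hu 2)
  set d := min (min ‖ζ - η‖ ‖ζ ^ 2 - η ^ 2‖) 1
  set R := max 1 (max ‖ζ‖ ‖η‖)
  have hd : 0 < d := lt_min (lt_min (norm_pos_iff.2 hd₁) (norm_pos_iff.2 hd₂)) one_pos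
  have hR : 1 ≤ R := le_max_left _ _
  have h2d : 2 ≤ 2 / d := le_div_self zero_le_two hd (min_le_right _ _)
  refine ⟨2 / d * R, by nlinarith, fun k hk => ?_⟩
  obtain ⟨D, hD, hdD⟩ : ∃ D : ℂ, (u k : ℂ) = (ζ ^ k - η ^ k) / D ∧ d ≤ ‖D‖ := by
    by_cases hodd : Odd k
    · exact ⟨ζ - η, by simp [hu k, hodd], (min_le_left _ _).trans (min_le_left _ _)⟩
    · exact ⟨ζ ^ 2 - η ^ 2, by simp [hu k, hodd], (min_le_left _ _).trans (min_le_right _ _)⟩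
  calc |(u k : ℝ)| = ‖ζ ^ k - η ^ k‖ / ‖D‖ := by
        rw [← norm_div, ← hD, Complex.norm_intCast]
    _ ≤ 2 * R ^ k / d := by
        gcongr
        exact (norm_pow_sub_pow_le ζ η k).trans (by gcongr; exact le_max_right _ _)
    _ = 2 / d * R ^ k := by ring
    _ ≤ (2 / d) ^ k * R ^ k := by
        gcongr
        exact le_self_pow₀ (by linarith) hk.ne'
    _ = (2 / d * R) ^ k := (mul_pow _ _ _).symm

theorem bernoulliVar_log_lcm_le {u : ℕ → ℤ} {K : ℝ} (hK : 1 ≤ K)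
    (hu0 : ∀ k : ℕ, 0 < k → u k ≠ 0) (huK : ∀ k : ℕ, 0 < k → |(u k : ℝ)| ≤ K ^ k)
    (n : ℕ) {δ : ℝ} (h0 : 0 ≤ δ) (h1 : δ ≤ 1) :
    bernoulliVar δ (Icc 1 n) (fun A => log (A.lcm u : ℤ)) ≤ δ * n ^ 3 * log K ^ 2 := by
  have hlogK : 0 ≤ log K := log_nonneg hK
  have hosc : ∀ i ∈ Icc 1 n, ∀ A ⊆ Icc 1 n,
      |log ((insert i A).lcm u : ℤ) - log ((A.erase i).lcm u : ℤ)| ≤ i * log K := by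
    intro i hi A hA
    have hpos : ∀ a ∈ insert i A, 0 < a := fun a ha =>
      (mem_Icc.1 (insert_subset hi hA ha)).1
    calc _ ≤ log (u i) := abs_log_lcm_insert_sub_log_lcm_erase_le u fun a ha => hu0 a (hpos a ha)
      _ = log |(u i : ℝ)| := (log_abs _).symm
      _ ≤ log (K ^ i) := log_le_log (by simpa using hu0 i (hpos i (mem_insert_self i A)))
          (huK i (hpos i (mem_insert_self i A)))
      _ = i * log K := log_pow K i
  calc bernoulliVar δ (Icc 1 n) (fun A => log (A.lcm u : ℤ))
      ≤ δ * ∑ i ∈ Icc 1 n, (i * log K) ^ 2 := bernoulliVar_le_sum_sq h0 h1 _ _ _ hosc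
    _ ≤ δ * ∑ _i ∈ Icc 1 n, (n * log K) ^ 2 := by
        gcongr with i hi
        exact_mod_cast (mem_Icc.1 hi).2
    _ = δ * n ^ 3 * log K ^ 2 := by
        rw [sum_const, Nat.card_Icc, Nat.add_sub_cancel, nsmul_eq_mul]; ring

theorem stmt_17_general
    (ζ η : ℂ)
    (u : ℕ → ℤ)
    (hu : ∀ k : ℕ, (u k : ℂ) =
      if Odd k then (ζ ^ k - η ^ k) / (ζ - η) else (ζ ^ k - η ^ k) / (ζ ^ 2 - η ^ 2))
    (hu0 : ∀ k : ℕ, 0 < k → u k ≠ 0) :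
    ∃ C : ℝ, 0 < C ∧ ∀ n : ℕ, 2 ≤ n → ∀ δ : ℝ, δ ∈ Set.Icc (0 : ℝ) 1 →
      (∑ A ∈ (Finset.Icc 1 n).powerset,
          δ ^ A.card * (1 - δ) ^ (n - A.card) * Real.log ((A.lcm u : ℤ) : ℝ) ^ 2) -
        (∑ A ∈ (Finset.Icc 1 n).powerset,
          δ ^ A.card * (1 - δ) ^ (n - A.card) * Real.log ((A.lcm u : ℤ) : ℝ)) ^ 2 ≤
      C * δ * (n : ℝ) ^ 3 * Real.log n := by
  obtain ⟨K, hK, huK⟩ := exists_abs_lehmer_le_pow hu hu0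
  have hlog2 : 0 < log 2 := log_pos one_lt_two
  refine ⟨log K ^ 2 / log 2, by have := log_pos (by linarith : 1 < K); positivity, ?_⟩
  rintro n hn δ ⟨h0, h1⟩
  have hvar := bernoulliVar_log_lcm_le (by linarith) hu0 huK n h0 h1
  rw [bernoulliVar, bernoulliExpect, bernoulliExpect, Nat.card_Icc, Nat.add_sub_cancel] at hvar
  have hlogn : log 2 ≤ log n := log_le_log two_pos (by exact_mod_cast hn)
  calc _ ≤ δ * n ^ 3 * log K ^ 2 := hvar
    _ = log K ^ 2 / log 2 * δ * n ^ 3 * log 2 := by field_simp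
    _ ≤ log K ^ 2 / log 2 * δ * n ^ 3 * log n := by gcongr

/-- There is a constant `C > 0`, depending only on `ζ` and `η`, such
that for every integer `n ≥ 2` and every `δ ∈ [0,1]`, if `A` is a random set in
`B(n, δ)` and `X = log lcm(ũ_a : a ∈ A)`, then `V(X) = E(X²) − E(X)² ≤ C·δ·n³·log n`. -/
theorem stmt_17
    (ζ η : ℂ) (c₁ c₂ : ℤ)
    (hc₁ : (c₁ : ℂ) = (ζ + η) ^ 2) (hc₂ : (c₂ : ℂ) = ζ * η)
    (hc₁0 : c₁ ≠ 0) (hc₂0 : c₂ ≠ 0) (hcop : IsCoprime c₁ c₂)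
    (habs : ‖η‖ ≤ ‖ζ‖)
    (hru : ∀ k : ℕ, 0 < k → (ζ / η) ^ k ≠ 1)
    (u : ℕ → ℤ)
    (hu : ∀ k : ℕ, (u k : ℂ) =
      if Odd k then (ζ ^ k - η ^ k) / (ζ - η) else (ζ ^ k - η ^ k) / (ζ ^ 2 - η ^ 2))
    (hu0 : ∀ k : ℕ, 0 < k → u k ≠ 0) :
    ∃ C : ℝ, 0 < C ∧ ∀ n : ℕ, 2 ≤ n → ∀ δ : ℝ, δ ∈ Set.Icc (0 : ℝ) 1 →
      (∑ A ∈ (Finset.Icc 1 n).powerset,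
          δ ^ A.card * (1 - δ) ^ (n - A.card) * Real.log ((A.lcm u : ℤ) : ℝ) ^ 2) -
        (∑ A ∈ (Finset.Icc 1 n).powerset,
          δ ^ A.card * (1 - δ) ^ (n - A.card) * Real.log ((A.lcm u : ℤ) : ℝ)) ^ 2 ≤
      C * δ * (n : ℝ) ^ 3 * Real.log n :=
  stmt_17_general ζ η u hu hu0
end

section
/- There exists a constant C > 0 such that for every integer n ≥ 2, Σ_{r=1}^{n} Σ_{s=1}^{n} gcd(r,s)·φ(r)·φ(s)/(r·s) ≤ C·n²·log n, where φ is Euler's totient function. -/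
open Finset

/-- There is a constant `C > 0` such that for every integer `n ≥ 2`,
`Σ_{r=1}^n Σ_{s=1}^n gcd(r,s)·φ(r)·φ(s)/(r·s) ≤ C·n²·log n`. -/
theorem stmt_19 :
    ∃ C : ℝ, 0 < C ∧ ∀ n : ℕ, 2 ≤ n →
      (∑ r ∈ Finset.Icc 1 n, ∑ s ∈ Finset.Icc 1 n,
        (Nat.gcd r s : ℝ) * (Nat.totient r : ℝ) * (Nat.totient s : ℝ) / ((r : ℝ) * s)) ≤
      C * (n : ℝ) ^ 2 * Real.log n := by
  refine ⟨3, by norm_num, fun n hn => ?_⟩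
  have hn1 : 1 ≤ n := le_trans (by norm_num) hn
  have hnR : (2:ℝ) ≤ (n:ℝ) := by exact_mod_cast hn
  -- Step 1: each term is at most gcd r s
  have h1 : (∑ r ∈ Finset.Icc 1 n, ∑ s ∈ Finset.Icc 1 n,
        (Nat.gcd r s : ℝ) * (Nat.totient r : ℝ) * (Nat.totient s : ℝ) / ((r : ℝ) * s)) ≤
      ∑ r ∈ Finset.Icc 1 n, ∑ s ∈ Finset.Icc 1 n, (Nat.gcd r s : ℝ) := by
    refine sum_le_sum fun r hr => sum_le_sum fun s hs => ?_
    have hr1 : 1 ≤ r := (mem_Icc.mp hr).1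
    have hs1 : 1 ≤ s := (mem_Icc.mp hs).1
    have hrp : (0:ℝ) < r := by exact_mod_cast hr1
    have hsp : (0:ℝ) < s := by exact_mod_cast hs1
    have htr : (Nat.totient r : ℝ) ≤ r := by exact_mod_cast Nat.totient_le r
    have hts : (Nat.totient s : ℝ) ≤ s := by exact_mod_cast Nat.totient_le s
    rw [div_le_iff₀ (by positivity)]
    have hg : (0:ℝ) ≤ (Nat.gcd r s : ℝ) := by positivity
    nlinarith [Nat.totient_pos.mpr (Nat.lt_of_lt_of_le Nat.zero_lt_one hr1),
      mul_le_mul htr hts (by positivity) hrp.le]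
  -- Step 2: gcd r s ≤ ∑_{d ≤ n, d ∣ r, d ∣ s} d
  have h2 : (∑ r ∈ Finset.Icc 1 n, ∑ s ∈ Finset.Icc 1 n, (Nat.gcd r s : ℝ)) ≤
      ∑ r ∈ Finset.Icc 1 n, ∑ s ∈ Finset.Icc 1 n, ∑ d ∈ Finset.Icc 1 n,
        (if d ∣ r then (1:ℝ) else 0) * (if d ∣ s then (1:ℝ) else 0) * d := by
    refine sum_le_sum fun r hr => sum_le_sum fun s hs => ?_
    have hr1 : 1 ≤ r := (mem_Icc.mp hr).1
    have hrn : r ≤ n := (mem_Icc.mp hr).2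
    have hs1 : 1 ≤ s := (mem_Icc.mp hs).1
    set g := Nat.gcd r s with hgdef
    have hg1 : 1 ≤ g := Nat.one_le_iff_ne_zero.mpr (Nat.gcd_ne_zero_left (by omega))
    have hgn : g ≤ n := le_trans (Nat.gcd_le_left s (by omega)) hrn
    have hmem : g ∈ Finset.Icc 1 n := mem_Icc.mpr ⟨hg1, hgn⟩
    have hdr : g ∣ r := Nat.gcd_dvd_left r s
    have hds : g ∣ s := Nat.gcd_dvd_right r s
    have := Finset.single_le_sum (f := fun d =>
        (if d ∣ r then (1:ℝ) else 0) * (if d ∣ s then (1:ℝ) else 0) * d)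
      (fun d _ => by positivity) hmem
    simpa [hdr, hds] using this
  -- Step 3: evaluate the sum
  have h3 : (∑ r ∈ Finset.Icc 1 n, ∑ s ∈ Finset.Icc 1 n, ∑ d ∈ Finset.Icc 1 n,
        (if d ∣ r then (1:ℝ) else 0) * (if d ∣ s then (1:ℝ) else 0) * d)
      = ∑ d ∈ Finset.Icc 1 n, ((n / d : ℕ) : ℝ) ^ 2 * d := by
    rw [show (∑ r ∈ Finset.Icc 1 n, ∑ s ∈ Finset.Icc 1 n, ∑ d ∈ Finset.Icc 1 n,
        (if d ∣ r then (1:ℝ) else 0) * (if d ∣ s then (1:ℝ) else 0) * d)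
        = ∑ r ∈ Finset.Icc 1 n, ∑ d ∈ Finset.Icc 1 n, ∑ s ∈ Finset.Icc 1 n,
        (if d ∣ r then (1:ℝ) else 0) * (if d ∣ s then (1:ℝ) else 0) * d from
      sum_congr rfl fun r _ => Finset.sum_comm, Finset.sum_comm]
    refine sum_congr rfl fun d _ => ?_
    have hcard : ∀ m : ℕ, (∑ x ∈ Finset.Icc 1 m, (if d ∣ x then (1:ℝ) else 0))
        = ((m / d : ℕ) : ℝ) := by
      intro m
      rw [Finset.sum_boole]
      norm_cast
      rw [show Finset.Icc 1 m = Finset.Ioc 0 m by rfl]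
      exact Nat.Ioc_filter_dvd_card_eq_div m d
    calc (∑ r ∈ Finset.Icc 1 n, ∑ s ∈ Finset.Icc 1 n,
            (if d ∣ r then (1:ℝ) else 0) * (if d ∣ s then (1:ℝ) else 0) * d)
        = (∑ r ∈ Finset.Icc 1 n, (if d ∣ r then (1:ℝ) else 0)) *
          (∑ s ∈ Finset.Icc 1 n, (if d ∣ s then (1:ℝ) else 0)) * d := by
          rw [Finset.sum_mul_sum, Finset.sum_mul]
          exact sum_congr rfl fun r _ => by rw [Finset.sum_mul]
      _ = ((n / d : ℕ) : ℝ) ^ 2 * d := by rw [hcard]; ring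
  -- Step 4: bound by n² * harmonic sum
  have h4 : (∑ d ∈ Finset.Icc 1 n, ((n / d : ℕ) : ℝ) ^ 2 * d) ≤
      (n:ℝ) ^ 2 * (1 + Real.log n) := by
    have : (∑ d ∈ Finset.Icc 1 n, ((n / d : ℕ) : ℝ) ^ 2 * d) ≤
        ∑ d ∈ Finset.Icc 1 n, (n:ℝ) ^ 2 * (d:ℝ)⁻¹ := by
      refine sum_le_sum fun d hd => ?_
      have hd1 : 1 ≤ d := (mem_Icc.mp hd).1
      have hdp : (0:ℝ) < d := by exact_mod_cast hd1
      have hle : ((n / d : ℕ) : ℝ) ≤ (n:ℝ) / d := Nat.cast_div_le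
      have h0 : (0:ℝ) ≤ ((n / d : ℕ) : ℝ) := by positivity
      calc ((n / d : ℕ) : ℝ) ^ 2 * d ≤ ((n:ℝ)/d) ^ 2 * d := by
            have := pow_le_pow_left₀ h0 hle 2
            exact mul_le_mul_of_nonneg_right this hdp.le
        _ = (n:ℝ) ^ 2 * (d:ℝ)⁻¹ := by field_simp
    refine this.trans ?_
    rw [← Finset.mul_sum]
    have hh : (∑ d ∈ Finset.Icc 1 n, ((d:ℝ))⁻¹) ≤ 1 + Real.log n := by
      have := harmonic_le_one_add_log n
      have heq : ((harmonic n : ℚ) : ℝ) = ∑ d ∈ Finset.Icc 1 n, ((d:ℝ))⁻¹ := by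
        rw [harmonic_eq_sum_Icc]
        push_cast
        rfl
      linarith [heq ▸ this]
    have hn2 : (0:ℝ) ≤ (n:ℝ)^2 := by positivity
    exact mul_le_mul_of_nonneg_left hh hn2
  -- Step 5: 1 + log n ≤ 3 log n for n ≥ 2
  have h5 : (n:ℝ) ^ 2 * (1 + Real.log n) ≤ 3 * (n:ℝ) ^ 2 * Real.log n := by
    have hlog : Real.log 2 ≤ Real.log n := Real.log_le_log (by norm_num) hnR
    have h2log : (1:ℝ)/2 ≤ Real.log 2 := by
      have := Real.add_one_le_exp (1/2 : ℝ)
      have hexp : Real.exp (1/2) ≤ 2 := by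
        nlinarith [Real.exp_one_lt_d9, Real.sq_sqrt (by norm_num : (0:ℝ) ≤ 2),
          Real.exp_pos (1/2:ℝ), Real.exp_add (1/2:ℝ) (1/2:ℝ)]
      calc (1:ℝ)/2 ≤ Real.log (Real.exp (1/2)) := by rw [Real.log_exp]
        _ ≤ Real.log 2 := Real.log_le_log (Real.exp_pos _) hexp
    have hn2 : (0:ℝ) < (n:ℝ)^2 := by positivity
    nlinarith [hlog, h2log, hn2]
  rw [h3] at h2
  linarith [h1, h2, h4, h5]
end
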